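/- arXiv:2205.04399 — 5 statements merged into one kernel-verified Lean document; each statement's English description precedes it below -/
import Mathlib

section
/- Let e > 0, let U be uniformly distributed on [0, e], let V be independent of U with an arbitrary distribution on [0, ∞), and let S = U + V. Then T = S − ⌊S/e⌋·e (S reduced modulo e) is uniformly distributed on the interval [0, e]. -/
open MeasureTheory ProbabilityTheory Filter Set

/-- Convolution of a (finite) invariant measure with a probability measure gives back the
invariant measure. -/
lemma map_add_prod_of_invariant {G : Type*} [AddCommGroup G] [MeasurableSpace G]
    [MeasurableAdd₂ G] (μ ν : Measure G) [SFinite μ] [IsProbabilityMeasure ν]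
    [μ.IsAddLeftInvariant] :
    (μ.prod ν).map (fun p : G × G => p.1 + p.2) = μ := by
  ext s hs
  rw [Measure.map_apply measurable_add hs,
    Measure.prod_apply_symm (measurable_add hs)]
  have hfib : ∀ y : G, μ ((fun x => (x, y)) ⁻¹' ((fun p : G × G => p.1 + p.2) ⁻¹' s)) = μ s := by
    intro y
    have hset : ((fun x => (x, y)) ⁻¹' ((fun p : G × G => p.1 + p.2) ⁻¹' s))
        = (fun x => y + x) ⁻¹' s := by
      ext x; simp [add_comm]
    rw [hset, measure_preimage_add]
  simp_rw [hfib]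
  simp

/-- If `U` is uniform on `[0, e]`, `V` is independent of `U` with an arbitrary
distribution on `[0, ∞)`, and `S = U + V`, then `T = S − ⌊S/e⌋·e` is uniformly
distributed on `[0, e]`. -/
theorem incubation_mod_uniform
    {Ω : Type*} [MeasurableSpace Ω] (P : Measure Ω) [IsProbabilityMeasure P]
    (e : ℝ) (he : 0 < e)
    (U V S T : Ω → ℝ)
    (hU : Measurable U) (hV : Measurable V)
    (hUlaw : P.map U = (ENNReal.ofReal e)⁻¹ • volume.restrict (Set.Icc 0 e))
    (hVnonneg : ∀ ω, 0 ≤ V ω)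
    (hindep : IndepFun U V P)
    (hS : ∀ ω, S ω = U ω + V ω)
    (hT : ∀ ω, T ω = S ω - (⌊S ω / e⌋ : ℝ) * e) :
    P.map T = (ENNReal.ofReal e)⁻¹ • volume.restrict (Set.Icc 0 e) := by
  haveI : Fact (0 < e) := ⟨he⟩
  have hmk : Measurable (β := AddCircle e) ((↑) : ℝ → AddCircle e) := AddCircle.measurable_mk'
  have hSeq : S = fun ω => U ω + V ω := funext hS
  have hSmeas : Measurable S := by rw [hSeq]; exact hU.add hV
  -- the representative map `AddCircle e → ℝ` with values in `[0, e)`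
  set g : AddCircle e → ℝ := fun x => ((AddCircle.equivIco e 0 x : ℝ)) with hgdef
  have hg : Measurable g := by
    have : g = fun x => ((AddCircle.measurableEquivIco e 0 x : ℝ)) := rfl
    rw [this]
    exact measurable_subtype_coe.comp (AddCircle.measurableEquivIco e 0).measurable
  -- `T = g ∘ mk ∘ S`
  have hTg : T = fun ω => g ((S ω : AddCircle e)) := by
    funext ω
    rw [hT ω, hgdef]
    simp only [AddCircle.coe_equivIco_mk_apply]
    rw [Int.fract]
    rw [sub_mul, div_mul_cancel₀ _ he.ne']
  -- the Ioc-restricted Lebesgue measure equals the Icc-restricted one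
  have hIocIcc : volume.restrict (Ioc (0:ℝ) e) = volume.restrict (Icc (0:ℝ) e) :=
    Measure.restrict_congr_set Ioc_ae_eq_Icc
  have hmk_mp := AddCircle.measurePreserving_mk e 0
  rw [zero_add] at hmk_mp
  -- law of `mk ∘ U` is the (normalized) Haar measure on the circle
  have hXlaw : P.map (fun ω => (U ω : AddCircle e))
      = (ENNReal.ofReal e)⁻¹ • (volume : Measure (AddCircle e)) := by
    have : P.map (fun ω => (U ω : AddCircle e)) = (P.map U).map ((↑) : ℝ → AddCircle e) :=
      (Measure.map_map hmk hU).symm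
    rw [this, hUlaw, Measure.map_smul, ← hIocIcc, hmk_mp.map_eq]
  -- independence of the projections
  have hXY : IndepFun (fun ω => (U ω : AddCircle e)) (fun ω => (V ω : AddCircle e)) P :=
    hindep.comp hmk hmk
  have hX : Measurable (fun ω => (U ω : AddCircle e)) := hmk.comp hU
  have hY : Measurable (fun ω => (V ω : AddCircle e)) := hmk.comp hV
  -- law of `mk ∘ S` is the normalized Haar measure
  have hprod : P.map (fun ω => ((U ω : AddCircle e), (V ω : AddCircle e)))
      = (P.map (fun ω => (U ω : AddCircle e))).prod (P.map (fun ω => (V ω : AddCircle e))) :=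
    (indepFun_iff_map_prod_eq_prod_map_map hX.aemeasurable hY.aemeasurable).mp hXY
  haveI : IsProbabilityMeasure (P.map (fun ω => (V ω : AddCircle e))) :=
    Measure.isProbabilityMeasure_map hY.aemeasurable
  have hSlaw : P.map (fun ω => (S ω : AddCircle e))
      = (ENNReal.ofReal e)⁻¹ • (volume : Measure (AddCircle e)) := by
    have h1 : (fun ω => (S ω : AddCircle e))
        = (fun p : AddCircle e × AddCircle e => p.1 + p.2)
          ∘ (fun ω => ((U ω : AddCircle e), (V ω : AddCircle e))) := by
      funext ω; simp [hS ω]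
    rw [h1, ← Measure.map_map measurable_add (hX.prodMk hY), hprod, hXlaw]
    exact map_add_prod_of_invariant _ _
  -- push forward through `g`
  have hTlaw : P.map T = ((ENNReal.ofReal e)⁻¹ • (volume : Measure (AddCircle e))).map g := by
    rw [hTg, ← hSlaw]
    exact (Measure.map_map hg (hmk.comp hSmeas)).symm
  rw [hTlaw, Measure.map_smul]
  congr 1
  -- it remains: (volume on AddCircle e).map g = volume.restrict (Icc 0 e)
  rw [← hmk_mp.map_eq, Measure.map_map hg hmk]
  have hae : (g ∘ ((↑) : ℝ → AddCircle e)) =ᵐ[volume.restrict (Ioc (0:ℝ) e)] id := by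
    have hne : ∀ᵐ x : ℝ ∂(volume.restrict (Ioc (0:ℝ) e)), x ≠ e := by
      refine (ae_restrict_of_ae ?_)
      rw [ae_iff]
      simp only [ne_eq, not_not]
      have : {x : ℝ | x = e} = {e} := by ext x; simp
      rw [this]
      exact Real.volume_singleton
    have hmem : ∀ᵐ x : ℝ ∂(volume.restrict (Ioc (0:ℝ) e)), x ∈ Ioc (0:ℝ) e :=
      ae_restrict_mem measurableSet_Ioc
    filter_upwards [hne, hmem] with x hxne hx
    have hx' : x ∈ Ico (0:ℝ) e := ⟨hx.1.le, lt_of_le_of_ne hx.2 hxne⟩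
    show g ((x : AddCircle e)) = x
    rw [hgdef]
    simp only [AddCircle.coe_equivIco_mk_apply]
    rw [Int.fract_eq_self.mpr ⟨div_nonneg hx'.1 he.le, (div_lt_one he).mpr hx'.2⟩]
    exact div_mul_cancel₀ _ he.ne'
  rw [Measure.map_congr hae, Measure.map_id, hIocIcc]
end

section
/- Let 0 < ε < M_1 and 2ε ≤ M_2, let F_0 be a distribution function with F_0(0) = 0, F_0(M_1) = 1 and a strictly positive continuous density f_0 on (0, M_1), and let F_E be a probability distribution concentrated on [ε, M_2] with a strictly positive continuous density on (ε, M_2). For a sub-distribution function G (a nondecreasing right-continuous function with 0 ≤ G ≤ 1 and G(x) = 0 for x < 0), set Φ(G) = ∫ e^{-1} ∫_0^{M_1 + M_2} ( F_0(s) − F_0(s − e) )² / ( G(s) − G(s − e) ) ds dF_E(e), with the conventions 0/0 = 0 and a/0 = ∞ for a > 0. Then Φ(G) ≥ 1 for every sub-distribution function G, Φ(F_0) = 1, and if Φ(G) ≤ 1 then G(t) = F_0(t) for all t ∈ [0, M_1]. -/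
open MeasureTheory Filter Set ENNReal Topology

/-!
Write `Δₑ H (s) = H s - H (s - e)`. For a monotone `H` with `0 ≤ H ≤ 1` vanishing on `(-∞, 0)`
and `0 ≤ e ≤ T`, the integral `∫₀ᵀ Δₑ H` telescopes to `∫_{T-e}^T H ≤ e`, with equality for `F0`
once `T - e ≥ M₁`. Integrating the pointwise inequality `2a ≤ a²/b + b` with `a = Δₑ F0`,
`b = Δₑ G` gives `∫₀ᵀ (Δₑ F0)² / Δₑ G ≥ 2e - e = e`, hence `Φ(G) ≥ 1`, with equality at `G = F0`.
If `Φ(G) ≤ 1`, then for some `e` in the support of `F_E` the inequality is an equality almost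
everywhere, so `Δₑ G = Δₑ F0` a.e. on `(0, T]`: the difference `G - F0` is a.e. `e`-periodic
there and vanishes on `(-∞, 0)`, hence vanishes a.e. on `(0, T]`. Right-continuity of `G` and
continuity of `F0` turn this into `G = F0` on `[0, M₁]`.
-/

namespace ENNReal

theorem two_mul_le_sq_div_add (a b : ℝ≥0∞) : 2 * a ≤ a ^ 2 / b + b := by
  rcases eq_or_ne b 0 with rfl | hb0
  · rcases eq_or_ne a 0 with rfl | ha0
    · simp
    · simp [ENNReal.div_zero (pow_ne_zero 2 ha0)]
  rcases eq_or_ne b ∞ with rfl | hbt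
  · simp
  rcases eq_or_ne a ∞ with rfl | hat
  · simp [ENNReal.top_div_of_ne_top hbt]
  lift a to NNReal using hat
  lift b to NNReal using hbt
  have hb : b ≠ 0 := by exact_mod_cast hb0
  rw [← ENNReal.coe_pow, ← ENNReal.coe_div hb]
  norm_cast
  rw [← NNReal.coe_le_coe]
  push_cast
  have hb' : (0 : ℝ) < b := by positivity
  rw [div_add' _ _ _ hb'.ne', le_div_iff₀ hb']
  nlinarith [sq_nonneg ((a : ℝ) - b)]

theorem eq_of_sq_div_add_eq_two_mul {a b : ℝ≥0∞} (ha : a ≠ ∞) (h : a ^ 2 / b + b = 2 * a) :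
    a = b := by
  have hbt : b ≠ ∞ := by
    rintro rfl
    simp only [add_top] at h
    exact ENNReal.mul_ne_top ofNat_ne_top ha h.symm
  rcases eq_or_ne b 0 with rfl | hb0
  · by_contra ha0
    simp only [ENNReal.div_zero (pow_ne_zero 2 ha0), add_zero] at h
    exact ENNReal.mul_ne_top ofNat_ne_top ha h.symm
  lift a to NNReal using ha
  lift b to NNReal using hbt
  have hb : b ≠ 0 := by exact_mod_cast hb0
  rw [← ENNReal.coe_pow, ← ENNReal.coe_div hb] at h
  norm_cast at h
  rw [← NNReal.coe_inj] at h
  push_cast at h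
  have hb' : (0 : ℝ) < b := by positivity
  rw [div_add' _ _ _ hb'.ne', div_eq_iff hb'.ne'] at h
  have : ((a : ℝ) - b) ^ 2 = 0 := by linarith
  exact_mod_cast (sub_eq_zero.1 (pow_eq_zero_iff two_ne_zero |>.1 this))

theorem one_le_ofReal_inv_mul_iff {e : ℝ} (he : 0 < e) {x : ℝ≥0∞} :
    1 ≤ ENNReal.ofReal e⁻¹ * x ↔ ENNReal.ofReal e ≤ x := by
  rw [ENNReal.ofReal_inv_of_pos he, ← ENNReal.div_eq_inv_mul,
    ENNReal.le_div_iff_mul_le (by simp [he]) (by simp), one_mul]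

theorem ofReal_inv_mul_le_one_iff {e : ℝ} (he : 0 < e) {x : ℝ≥0∞} :
    ENNReal.ofReal e⁻¹ * x ≤ 1 ↔ x ≤ ENNReal.ofReal e := by
  rw [ENNReal.ofReal_inv_of_pos he, ← ENNReal.div_eq_inv_mul,
    ENNReal.div_le_iff (by simp [he]) ofReal_ne_top, one_mul]

end ENNReal

section SqDiv

variable {α : Type*} [MeasurableSpace α] {μ : Measure α} {A B : α → ℝ≥0∞}

theorem lintegral_le_lintegral_sq_div (hB : AEMeasurable B μ)
    (hBA : ∫⁻ x, B x ∂μ ≤ ∫⁻ x, A x ∂μ) (hA : ∫⁻ x, A x ∂μ ≠ ∞) :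
    ∫⁻ x, A x ∂μ ≤ ∫⁻ x, A x ^ 2 / B x ∂μ := by
  have key : 2 * ∫⁻ x, A x ∂μ ≤ (∫⁻ x, A x ^ 2 / B x ∂μ) + ∫⁻ x, A x ∂μ :=
    calc 2 * ∫⁻ x, A x ∂μ = ∫⁻ x, 2 * A x ∂μ := (lintegral_const_mul' _ _ ofNat_ne_top).symm
      _ ≤ ∫⁻ x, A x ^ 2 / B x + B x ∂μ :=
        lintegral_mono fun x => ENNReal.two_mul_le_sq_div_add (A x) (B x)
      _ = (∫⁻ x, A x ^ 2 / B x ∂μ) + ∫⁻ x, B x ∂μ := lintegral_add_right' _ hB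
      _ ≤ (∫⁻ x, A x ^ 2 / B x ∂μ) + ∫⁻ x, A x ∂μ := by gcongr
  rwa [two_mul, ENNReal.add_le_add_iff_right hA] at key

theorem ae_eq_of_lintegral_sq_div_le (hA : AEMeasurable A μ) (hB : AEMeasurable B μ)
    (hBA : ∫⁻ x, B x ∂μ ≤ ∫⁻ x, A x ∂μ) (hA_fin : ∫⁻ x, A x ∂μ ≠ ∞)
    (h : ∫⁻ x, A x ^ 2 / B x ∂μ ≤ ∫⁻ x, A x ∂μ) : A =ᵐ[μ] B := by
  have h2A : ∫⁻ x, 2 * A x ∂μ = 2 * ∫⁻ x, A x ∂μ := lintegral_const_mul' _ _ ofNat_ne_top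
  have hsum : (fun x => 2 * A x) =ᵐ[μ] fun x => A x ^ 2 / B x + B x := by
    refine ae_eq_of_ae_le_of_lintegral_le
      (Eventually.of_forall fun x => ENNReal.two_mul_le_sq_div_add (A x) (B x))
      (h2A ▸ ENNReal.mul_ne_top ofNat_ne_top hA_fin) (((hA.pow_const 2).div hB).add hB) ?_
    rw [lintegral_add_right' _ hB, h2A, two_mul]
    exact add_le_add h hBA
  filter_upwards [hsum, ae_lt_top' hA hA_fin] with x hx hx_fin
  exact ENNReal.eq_of_sq_div_add_eq_two_mul hx_fin.ne hx.symm

end SqDiv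

theorem lintegral_Ioc_comp_sub (f : ℝ → ℝ≥0∞) (a b e : ℝ) :
    ∫⁻ s in Ioc a b, f (s - e) = ∫⁻ s in Ioc (a - e) (b - e), f s := by
  have := (measurePreserving_sub_right volume e).setLIntegral_comp_preimage_emb
    (measurableEmbedding_subRight e) f (Ioc (a - e) (b - e))
  simpa only [preimage_sub_const_Ioc, sub_add_cancel] using this

structure IsSubCDF (g : ℝ → ℝ) : Prop where
  monotone : Monotone g
  eq_zero_of_neg : ∀ x < 0, g x = 0
  le_one : ∀ x, g x ≤ 1

namespace IsSubCDF

variable {g : ℝ → ℝ} (hg : IsSubCDF g) {e T : ℝ}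
include hg

theorem nonneg (x : ℝ) : 0 ≤ g x :=
  (hg.eq_zero_of_neg (min x (-1)) (by simp)).symm.le.trans (hg.monotone (min_le_left _ _))

theorem increment_nonneg (he : 0 ≤ e) (s : ℝ) : 0 ≤ g s - g (s - e) :=
  sub_nonneg.2 (hg.monotone (by linarith))

theorem lintegral_Ioc_ofReal_le (a b : ℝ) :
    ∫⁻ s in Ioc a b, ENNReal.ofReal (g s) ≤ ENNReal.ofReal (b - a) :=
  calc ∫⁻ s in Ioc a b, ENNReal.ofReal (g s) ≤ ∫⁻ _ in Ioc a b, 1 :=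
        lintegral_mono fun s => ENNReal.ofReal_le_one.2 (hg.le_one s)
    _ = ENNReal.ofReal (b - a) := by simp

theorem lintegral_increment (he : 0 ≤ e) (heT : e ≤ T) :
    ∫⁻ s in Ioc 0 T, ENNReal.ofReal (g s - g (s - e)) =
      ∫⁻ s in Ioc (T - e) T, ENNReal.ofReal (g s) := by
  set φ : ℝ → ℝ≥0∞ := fun s => ENNReal.ofReal (g s)
  have hφ : Measurable φ := ENNReal.measurable_ofReal.comp hg.monotone.measurable
  have hφ_fin (a b : ℝ) : ∫⁻ s in Ioc a b, φ s ≠ ∞ :=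
    ne_top_of_le_ne_top ofReal_ne_top (hg.lintegral_Ioc_ofReal_le a b)
  have hφ_neg : ∫⁻ s in Ioc (-e) 0, φ s = 0 := by
    rw [← restrict_Ioo_eq_restrict_Ioc]
    refine (setLIntegral_congr_fun measurableSet_Ioo fun s hs => ?_).trans lintegral_zero
    simp [φ, hg.eq_zero_of_neg s hs.2]
  have hsplit (a b c : ℝ) (hab : a ≤ b) (hbc : b ≤ c) :
      ∫⁻ s in Ioc a c, φ s = (∫⁻ s in Ioc a b, φ s) + ∫⁻ s in Ioc b c, φ s := by
    rw [← Ioc_union_Ioc_eq_Ioc hab hbc]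
    exact lintegral_union measurableSet_Ioc (Ioc_disjoint_Ioc_of_le le_rfl)
  have hshift : ∫⁻ s in Ioc 0 T, φ (s - e) = ∫⁻ s in Ioc 0 (T - e), φ s := by
    rw [lintegral_Ioc_comp_sub, zero_sub, hsplit (-e) 0 (T - e) (by linarith) (by linarith),
      hφ_neg, zero_add]
  calc ∫⁻ s in Ioc 0 T, ENNReal.ofReal (g s - g (s - e))
      = ∫⁻ s in Ioc 0 T, φ s - φ (s - e) :=
        lintegral_congr fun s => ENNReal.ofReal_sub _ (hg.nonneg _)
    _ = (∫⁻ s in Ioc 0 T, φ s) - ∫⁻ s in Ioc 0 T, φ (s - e) :=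
        lintegral_sub (hφ.comp (measurable_sub_const e)) (by rw [hshift]; exact hφ_fin _ _)
          (Eventually.of_forall fun s => ENNReal.ofReal_le_ofReal (hg.monotone (by linarith)))
    _ = ∫⁻ s in Ioc (T - e) T, φ s := by
        rw [hshift, hsplit 0 (T - e) T (by linarith) (by linarith),
          ENNReal.add_sub_cancel_left (hφ_fin _ _)]

theorem lintegral_increment_le (he : 0 ≤ e) (heT : e ≤ T) :
    ∫⁻ s in Ioc 0 T, ENNReal.ofReal (g s - g (s - e)) ≤ ENNReal.ofReal e := by
  simpa [hg.lintegral_increment he heT] using hg.lintegral_Ioc_ofReal_le (T - e) T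

theorem lintegral_increment_of_eq_one (he : 0 ≤ e) (heT : e ≤ T)
    (hg_one : ∀ x, T - e ≤ x → g x = 1) :
    ∫⁻ s in Ioc 0 T, ENNReal.ofReal (g s - g (s - e)) = ENNReal.ofReal e := by
  rw [hg.lintegral_increment he heT, setLIntegral_congr_fun measurableSet_Ioc
    fun s hs => by rw [hg_one s hs.1.le, ENNReal.ofReal_one]]
  simp

end IsSubCDF

-- `Φ(G) = ∫ e⁻¹ * innerCriterion F0 G (M₁ + M₂) e dF_E(e)`.
noncomputable def innerCriterion (F G : ℝ → ℝ) (T e : ℝ) : ℝ≥0∞ :=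
  ∫⁻ s in Ioc 0 T, ENNReal.ofReal ((F s - F (s - e)) ^ 2) / ENNReal.ofReal (G s - G (s - e))

theorem measurable_innerCriterion {F G : ℝ → ℝ} (hF : Measurable F) (hG : Measurable G) (T : ℝ) :
    Measurable (innerCriterion F G T) := by
  have : Measurable fun p : ℝ × ℝ => ENNReal.ofReal ((F p.2 - F (p.2 - p.1)) ^ 2) /
      ENNReal.ofReal (G p.2 - G (p.2 - p.1)) := by fun_prop
  exact this.lintegral_prod_right'

section InnerCriterion

variable {F G : ℝ → ℝ} {e T : ℝ}

theorem innerCriterion_eq_lintegral_sq_div (hF : IsSubCDF F) (he : 0 ≤ e) :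
    innerCriterion F G T e = ∫⁻ s in Ioc 0 T,
      ENNReal.ofReal (F s - F (s - e)) ^ 2 / ENNReal.ofReal (G s - G (s - e)) :=
  lintegral_congr fun s => by rw [ENNReal.ofReal_pow (hF.increment_nonneg he s)]

theorem innerCriterion_self (hF : IsSubCDF F) (he : 0 ≤ e) (heT : e ≤ T)
    (hF_one : ∀ x, T - e ≤ x → F x = 1) : innerCriterion F F T e = ENNReal.ofReal e := by
  rw [innerCriterion_eq_lintegral_sq_div hF he, ← hF.lintegral_increment_of_eq_one he heT hF_one]
  refine lintegral_congr fun s => ?_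
  set a := ENNReal.ofReal (F s - F (s - e))
  rcases eq_or_ne a 0 with ha | ha
  · simp [ha]
  · rw [sq, ENNReal.mul_div_cancel_right ha ofReal_ne_top]

theorem ofReal_le_innerCriterion (hF : IsSubCDF F) (hG : IsSubCDF G) (he : 0 ≤ e) (heT : e ≤ T)
    (hF_one : ∀ x, T - e ≤ x → F x = 1) : ENNReal.ofReal e ≤ innerCriterion F G T e := by
  have hFe := hF.lintegral_increment_of_eq_one he heT hF_one
  have hGm := hG.monotone.measurable
  rw [innerCriterion_eq_lintegral_sq_div hF he, ← hFe]
  refine lintegral_le_lintegral_sq_div (by fun_prop) ?_ (hFe ▸ ofReal_ne_top)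
  exact hFe ▸ hG.lintegral_increment_le he heT

theorem ae_increment_eq_of_innerCriterion_le (hF : IsSubCDF F) (hG : IsSubCDF G) (he : 0 ≤ e)
    (heT : e ≤ T) (hF_one : ∀ x, T - e ≤ x → F x = 1)
    (h : innerCriterion F G T e ≤ ENNReal.ofReal e) :
    ∀ᵐ s ∂volume.restrict (Ioc 0 T), G s - G (s - e) = F s - F (s - e) := by
  have hFe := hF.lintegral_increment_of_eq_one he heT hF_one
  have hFm := hF.monotone.measurable
  have hGm := hG.monotone.measurable
  rw [innerCriterion_eq_lintegral_sq_div hF he, ← hFe] at h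
  have hAB := ae_eq_of_lintegral_sq_div_le (by fun_prop) (by fun_prop)
    (hFe ▸ hG.lintegral_increment_le he heT) (hFe ▸ ofReal_ne_top) h
  filter_upwards [hAB] with s hs
  exact ((ENNReal.ofReal_eq_ofReal_iff (hF.increment_nonneg he s)
    (hG.increment_nonneg he s)).1 hs).symm

theorem one_le_ofReal_inv_mul_innerCriterion (hF : IsSubCDF F) (hG : IsSubCDF G) (he : 0 < e)
    (heT : e ≤ T) (hF_one : ∀ x, T - e ≤ x → F x = 1) :
    1 ≤ ENNReal.ofReal e⁻¹ * innerCriterion F G T e :=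
  (ENNReal.one_le_ofReal_inv_mul_iff he).2 (ofReal_le_innerCriterion hF hG he.le heT hF_one)

theorem ofReal_inv_mul_innerCriterion_self (hF : IsSubCDF F) (he : 0 < e) (heT : e ≤ T)
    (hF_one : ∀ x, T - e ≤ x → F x = 1) : ENNReal.ofReal e⁻¹ * innerCriterion F F T e = 1 := by
  rw [innerCriterion_self hF he.le heT hF_one, ENNReal.ofReal_inv_of_pos he,
    ENNReal.inv_mul_cancel (by simp [he]) ofReal_ne_top]

end InnerCriterion

theorem ae_eq_zero_of_ae_eq_comp_sub {β : Type*} [Zero β] {h : ℝ → β} {e T : ℝ} (he : 0 < e)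
    (h_neg : ∀ x < 0, h x = 0)
    (h_shift : ∀ᵐ s ∂volume.restrict (Ioc 0 T), h s = h (s - e)) :
    h =ᵐ[volume.restrict (Ioc 0 T)] 0 := by
  rw [ae_restrict_iff' measurableSet_Ioc] at h_shift
  rw [EventuallyEq, ae_restrict_iff' measurableSet_Ioc]
  have key (n : ℕ) : ∀ᵐ s, s ∈ Ioc 0 T → s ≤ n * e → h s = 0 := by
    induction n with
    | zero =>
      filter_upwards with s hs hsn
      exact absurd hs.1 (by simpa using hsn)
    | succ n ih =>
      filter_upwards [h_shift, (measurePreserving_sub_right volume e).quasiMeasurePreserving.ae ih,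
        volume.ae_ne e] with s hs_shift hs_prev hs_ne hs hsn
      rw [hs_shift hs]
      rcases lt_or_gt_of_ne (sub_ne_zero.2 hs_ne) with hneg | hpos
      · exact h_neg _ hneg
      · exact hs_prev ⟨hpos, by linarith [hs.2]⟩ (by push_cast at hsn; linarith)
  obtain ⟨n, hn⟩ := exists_nat_ge (T / e)
  filter_upwards [key n] with s hs hsT
  exact hs hsT (hsT.2.trans ((div_le_iff₀ he).1 hn))

theorem ContinuousWithinAt.eq_of_ae_restrict_Ioo {β : Type*} [TopologicalSpace β] [T2Space β]
    {f g : ℝ → β} {a b : ℝ} (hab : a < b) (hf : ContinuousWithinAt f (Ici a) a)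
    (hg : ContinuousWithinAt g (Ici a) a) (hfg : f =ᵐ[volume.restrict (Ioo a b)] g) :
    f a = g a := by
  rw [EventuallyEq, ae_restrict_iff' measurableSet_Ioo] at hfg
  have hfreq : ∃ᶠ x in 𝓝[>] a, f x = g x := by
    rw [(nhdsGT_basis a).frequently_iff]
    intro c hac
    obtain ⟨x, hx, hx_eq⟩ := (Measure.dense_of_ae hfg).inter_open_nonempty (Ioo a (min b c))
      isOpen_Ioo (nonempty_Ioo.2 (lt_min hab hac))
    exact ⟨x, ⟨hx.1, hx.2.trans_le (min_le_right _ _)⟩,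
      hx_eq ⟨hx.1, hx.2.trans_le (min_le_left _ _)⟩⟩
  exact tendsto_nhds_unique_of_frequently_eq (hf.mono Ioi_subset_Ici_self)
    (hg.mono Ioi_subset_Ici_self) hfreq

theorem eqOn_Ico_of_innerCriterion_le {F G : ℝ → ℝ} {e T : ℝ} (hF : IsSubCDF F)
    (hF_cont : Continuous F) (hG : IsSubCDF G) (hG_cont : ∀ x, ContinuousWithinAt G (Ici x) x)
    (he : 0 < e) (heT : e ≤ T) (hF_one : ∀ x, T - e ≤ x → F x = 1)
    (h : innerCriterion F G T e ≤ ENNReal.ofReal e) : EqOn G F (Ico 0 T) := by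
  have hdiff : (fun s => G s - F s) =ᵐ[volume.restrict (Ioc 0 T)] 0 := by
    refine ae_eq_zero_of_ae_eq_comp_sub he
      (fun x hx => by simp [hF.eq_zero_of_neg x hx, hG.eq_zero_of_neg x hx]) ?_
    filter_upwards [ae_increment_eq_of_innerCriterion_le hF hG he.le heT hF_one h] with s hs
    linarith
  intro t ht
  refine (hG_cont t).eq_of_ae_restrict_Ioo ht.2 hF_cont.continuousWithinAt ?_
  filter_upwards [ae_restrict_of_ae_restrict_of_subset (Ioo_subset_Ioc_self.trans
    (Ioc_subset_Ioc_left ht.1)) hdiff] with s hs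
  exact sub_eq_zero.1 hs

section Density

variable {F f : ℝ → ℝ} {M : ℝ} (hF : ∀ x, F x = ∫ y in Iic x, f y)
  (hf_supp : ∀ x ∉ Ioo 0 M, f x = 0) (hFM : F M = 1)
include hF hf_supp hFM

theorem integrable_density : Integrable f := by
  have hIic : IntegrableOn f (Iic M) := by
    by_contra hni
    rw [hF, integral_undef hni] at hFM
    exact zero_ne_one hFM
  have hIoi : IntegrableOn f (Ioi M) := integrableOn_zero.congr_fun
    (fun x hx => (hf_supp x fun h => (mem_Ioi.1 hx).not_gt h.2).symm) measurableSet_Ioi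
  simpa using hIic.union hIoi

theorem continuous_cdf : Continuous F := by
  rw [funext hF, continuous_iff_continuousAt]
  exact fun x => ((integrable_density hF hf_supp hFM).integrableOn.continuousOn_Iic_primitive_Iic
    (a₀ := x + 1)).continuousAt (Iic_mem_nhds (lt_add_one x))

theorem cdf_eq_one_of_le {x : ℝ} (hx : M ≤ x) : F x = 1 := by
  rw [hF, setIntegral_eq_of_subset_of_forall_sdiff_eq_zero measurableSet_Iic
    (Iic_subset_Iic.2 hx) fun y hy => hf_supp y fun h => hy.2 h.2.le, ← hF, hFM]

theorem isSubCDF_cdf (hf_nonneg : ∀ x, 0 ≤ f x) : IsSubCDF F := by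
  have hmono : Monotone F := fun x y hxy => by
    rw [hF, hF]
    exact setIntegral_mono_set (integrable_density hF hf_supp hFM).integrableOn
      (Eventually.of_forall hf_nonneg) (Eventually.of_forall (Iic_subset_Iic.2 hxy))
  refine ⟨hmono, fun x hx => ?_, fun x => ?_⟩
  · rw [hF]
    exact setIntegral_eq_zero_of_forall_eq_zero fun y hy =>
      hf_supp y fun h => (lt_of_le_of_lt hy hx).not_gt h.1
  · exact (hmono (le_max_left x M)).trans
      (cdf_eq_one_of_le hF hf_supp hFM (le_max_right x M)).le

end Density

theorem ae_withDensity_mem {α : Type*} [MeasurableSpace α] {μ : Measure α} {f : α → ℝ≥0∞}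
    {s : Set α} (hs : MeasurableSet s) (hf : ∀ x ∉ s, f x = 0) :
    ∀ᵐ x ∂μ.withDensity f, x ∈ s := by
  change μ.withDensity f sᶜ = 0
  rw [withDensity_apply _ hs.compl]
  exact (setLIntegral_congr_fun hs.compl hf).trans lintegral_zero

theorem exists_eq_one_of_lintegral_le_one {α : Type*} [MeasurableSpace α] {μ : Measure α}
    [IsProbabilityMeasure μ] {I : α → ℝ≥0∞} {p : α → Prop} (hI : AEMeasurable I μ)
    (h_one : ∀ᵐ x ∂μ, 1 ≤ I x) (hp : ∀ᵐ x ∂μ, p x) (h : ∫⁻ x, I x ∂μ ≤ 1) :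
    ∃ x, p x ∧ I x = 1 := by
  have h_eq : (fun _ => 1) =ᵐ[μ] I :=
    ae_eq_of_ae_le_of_lintegral_le h_one (by simp) hI (by simpa using h)
  obtain ⟨x, hx, hx_eq⟩ := (hp.and h_eq).exists
  exact ⟨x, hx, hx_eq.symm⟩

theorem incubation_consistency_criterion_general
    (ε M₁ M₂ : ℝ) (hε : 0 < ε) (hεM₁ : ε < M₁)
    (F0 f0 : ℝ → ℝ)
    (hF0 : ∀ x, F0 x = ∫ y in Set.Iic x, f0 y)
    (hf0pos : ∀ x ∈ Set.Ioo 0 M₁, 0 < f0 x)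
    (hf0supp : ∀ x, x ∉ Set.Ioo 0 M₁ → f0 x = 0)
    (hF0M₁ : F0 M₁ = 1)
    (fE : ℝ → ℝ)
    (hfEsupp : ∀ x, x ∉ Set.Icc ε M₂ → fE x = 0)
    (ν : Measure ℝ) (hν : ν = volume.withDensity fun e => ENNReal.ofReal (fE e))
    (hνprob : ν Set.univ = 1)
    (Φ : (ℝ → ℝ) → ℝ≥0∞)
    (hΦ : ∀ G : ℝ → ℝ, Φ G = ∫⁻ e, ENNReal.ofReal e⁻¹ *
        (∫⁻ s in Set.Ioc (0 : ℝ) (M₁ + M₂),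
          ENNReal.ofReal ((F0 s - F0 (s - e)) ^ 2) / ENNReal.ofReal (G s - G (s - e))) ∂ν) :
    (∀ G : ℝ → ℝ, Monotone G → (∀ x, G x ∈ Set.Icc (0 : ℝ) 1) →
        (∀ x < (0 : ℝ), G x = 0) → (∀ x, ContinuousWithinAt G (Set.Ici x) x) →
        1 ≤ Φ G) ∧
    Φ F0 = 1 ∧
    (∀ G : ℝ → ℝ, Monotone G → (∀ x, G x ∈ Set.Icc (0 : ℝ) 1) →
        (∀ x < (0 : ℝ), G x = 0) → (∀ x, ContinuousWithinAt G (Set.Ici x) x) →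
        Φ G ≤ 1 → ∀ t ∈ Set.Icc (0 : ℝ) M₁, G t = F0 t) := by
  have : IsProbabilityMeasure ν := ⟨hνprob⟩
  have hF0_sub : IsSubCDF F0 := isSubCDF_cdf hF0 hf0supp hF0M₁ fun x =>
    (em (x ∈ Ioo 0 M₁)).elim (fun hx => (hf0pos x hx).le) fun hx => (hf0supp x hx).ge
  have hν_supp : ∀ᵐ e ∂ν, e ∈ Icc ε M₂ := hν ▸ ae_withDensity_mem measurableSet_Icc
    fun e he => by rw [hfEsupp e he, ENNReal.ofReal_zero]
  have hparam (e : ℝ) (he : e ∈ Icc ε M₂) :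
      0 < e ∧ e ≤ M₁ + M₂ ∧ ∀ x, M₁ + M₂ - e ≤ x → F0 x = 1 :=
    ⟨hε.trans_le he.1, by linarith [he.2],
      fun x hx => cdf_eq_one_of_le hF0 hf0supp hF0M₁ (by linarith [he.2])⟩
  have hlower (G : ℝ → ℝ) (hG : IsSubCDF G) :
      ∀ᵐ e ∂ν, 1 ≤ ENNReal.ofReal e⁻¹ * innerCriterion F0 G (M₁ + M₂) e := by
    filter_upwards [hν_supp] with e he
    obtain ⟨he_pos, heT, hF0_one⟩ := hparam e he
    exact one_le_ofReal_inv_mul_innerCriterion hF0_sub hG he_pos heT hF0_one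
  refine ⟨fun G hG_mono hG_mem hG_neg _ => ?_, ?_,
    fun G hG_mono hG_mem hG_neg hG_cont hΦG t ht => ?_⟩
  · rw [hΦ, ← (by simp : ∫⁻ _, (1 : ℝ≥0∞) ∂ν = 1)]
    exact lintegral_mono_ae (hlower G ⟨hG_mono, hG_neg, fun x => (hG_mem x).2⟩)
  · rw [hΦ, ← (by simp : ∫⁻ _, (1 : ℝ≥0∞) ∂ν = 1)]
    refine lintegral_congr_ae ?_
    filter_upwards [hν_supp] with e he
    obtain ⟨he_pos, heT, hF0_one⟩ := hparam e he
    exact ofReal_inv_mul_innerCriterion_self hF0_sub he_pos heT hF0_one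
  · have hG : IsSubCDF G := ⟨hG_mono, hG_neg, fun x => (hG_mem x).2⟩
    obtain ⟨e, he, he_one⟩ := exists_eq_one_of_lintegral_le_one
      ((ENNReal.measurable_ofReal.comp measurable_inv).mul (measurable_innerCriterion
        hF0_sub.monotone.measurable hG_mono.measurable _)).aemeasurable
      (hlower G hG) hν_supp (by simpa [hΦ, innerCriterion] using hΦG)
    obtain ⟨he_pos, heT, hF0_one⟩ := hparam e he
    exact eqOn_Ico_of_innerCriterion_le hF0_sub (continuous_cdf hF0 hf0supp hF0M₁) hG hG_cont
      he_pos heT hF0_one ((ENNReal.ofReal_inv_mul_le_one_iff he_pos).1 he_one.le)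
      ⟨ht.1, by linarith [he.2, ht.2]⟩

/-- Key minimization step in the consistency proof for the incubation time model:
the criterion `Φ(G) = ∫ e⁻¹ ∫_0^{M₁+M₂} (F0(s) − F0(s−e))² / (G(s) − G(s−e)) ds dF_E(e)`
(with conventions `0/0 = 0`, `a/0 = ∞` for `a > 0`, realized by `ℝ≥0∞`-division)
satisfies `Φ(G) ≥ 1` for every sub-distribution function `G`, `Φ(F0) = 1`, and any
sub-distribution function `G` with `Φ(G) ≤ 1` coincides with `F0` on `[0, M₁]`. -/
theorem incubation_consistency_criterion
    (ε M₁ M₂ : ℝ) (hε : 0 < ε) (hεM₁ : ε < M₁) (hM₂ : 2 * ε ≤ M₂)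
    (F0 f0 : ℝ → ℝ)
    (hF0 : ∀ x, F0 x = ∫ y in Set.Iic x, f0 y)
    (hf0pos : ∀ x ∈ Set.Ioo 0 M₁, 0 < f0 x)
    (hf0cont : ContinuousOn f0 (Set.Ioo 0 M₁))
    (hf0supp : ∀ x, x ∉ Set.Ioo 0 M₁ → f0 x = 0)
    (hF00 : F0 0 = 0) (hF0M₁ : F0 M₁ = 1)
    (fE : ℝ → ℝ)
    (hfEpos : ∀ x ∈ Set.Ioo ε M₂, 0 < fE x)
    (hfEcont : ContinuousOn fE (Set.Ioo ε M₂))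
    (hfEsupp : ∀ x, x ∉ Set.Icc ε M₂ → fE x = 0)
    (ν : Measure ℝ) (hν : ν = volume.withDensity fun e => ENNReal.ofReal (fE e))
    (hνprob : ν Set.univ = 1)
    (Φ : (ℝ → ℝ) → ℝ≥0∞)
    (hΦ : ∀ G : ℝ → ℝ, Φ G = ∫⁻ e, ENNReal.ofReal e⁻¹ *
        (∫⁻ s in Set.Ioc (0 : ℝ) (M₁ + M₂),
          ENNReal.ofReal ((F0 s - F0 (s - e)) ^ 2) / ENNReal.ofReal (G s - G (s - e))) ∂ν) :
    (∀ G : ℝ → ℝ, Monotone G → (∀ x, G x ∈ Set.Icc (0 : ℝ) 1) →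
        (∀ x < (0 : ℝ), G x = 0) → (∀ x, ContinuousWithinAt G (Set.Ici x) x) →
        1 ≤ Φ G) ∧
    Φ F0 = 1 ∧
    (∀ G : ℝ → ℝ, Monotone G → (∀ x, G x ∈ Set.Icc (0 : ℝ) 1) →
        (∀ x < (0 : ℝ), G x = 0) → (∀ x, ContinuousWithinAt G (Set.Ici x) x) →
        Φ G ≤ 1 → ∀ t ∈ Set.Icc (0 : ℝ) M₁, G t = F0 t) :=
  incubation_consistency_criterion_general ε M₁ M₂ hε hεM₁ F0 f0 hF0 hf0pos hf0supp hF0M₁ fE hfEsupp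
    ν hν hνprob Φ hΦ
end

section
/- Let K be a continuously differentiable probability density supported on [−1, 1], and set IK(x) = ∫_{−∞}^x K(y) dy, K_h(u) = h^{-1} K(u/h), IK_h(x) = IK(x/h). Let μ be a probability measure on ℝ with compact support and distribution function F, and define 𝔽_{h_0}(x) = ∫ K_{h_0}(x − y) F(y) dy. Then for all t ∈ ℝ and all h, h_0 > 0: ∫ [ ∫ IK_h(t − x) K_{h_0}(x − y) dx − IK_{h_0}(t − y) ] dμ(y) = ∫ K_h(t − x) 𝔽_{h_0}(x) dx − 𝔽_{h_0}(t). -/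
/-!
Write `IK(c) = ∫_{u ≤ c} K u` and `K_η(v) = η⁻¹ K(v / η)`. Both sides are rearrangements of
iterated integrals of `K_h(t - w) K_{h₀}(x - y) 1[x ≤ w]` against `dw dx dμ(y)`. By rescaling,
`IK((t - x) / h) = ∫_{w ≥ x} K_h(t - w) dw` and `∫_{x ≤ w} K_{h₀}(x - y) dx = IK((w - y) / h₀)`,
so Fubini in `(x, w)` moves the kernel `K_h` from the primitive onto the density (the
integration by parts of the paper). Writing `F(y) = ∫ 1[z ≤ y] dμ(z)`, Fubini in `(y, z)`
gives `𝔽_{h₀}(c) = ∫ IK((c - z) / h₀) dμ(z)`, and a last Fubini in `(x, y)` concludes.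
-/

open MeasureTheory Filter Set

namespace MeasureTheory

section Rescaling

variable {E : Type*} [NormedAddCommGroup E] [NormedSpace ℝ E] {η : ℝ}

theorem integral_inv_smul_comp_div (g : ℝ → E) (hη : 0 < η) :
    ∫ x, η⁻¹ • g (x / η) = ∫ u, g u := by
  rw [integral_smul, Measure.integral_comp_div, abs_of_pos hη, inv_smul_smul₀ hη.ne']

theorem setIntegral_Ici_inv_smul_comp_sub_div (g : ℝ → E) (hη : 0 < η) (c z : ℝ) :
    ∫ y in Ici z, η⁻¹ • g ((c - y) / η) = ∫ u in Iic ((c - z) / η), g u := by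
  have hind : ∀ y, (Ici z).indicator (fun y => η⁻¹ • g ((c - y) / η)) y
      = η⁻¹ • (Iic ((c - z) / η)).indicator g ((c - y) / η) := by
    intro y
    have hmem : z ≤ y ↔ (c - y) / η ≤ (c - z) / η := by
      rw [div_le_div_iff_of_pos_right hη, sub_le_sub_iff_left]
    simp only [indicator_apply, mem_Ici, mem_Iic, hmem]
    split_ifs <;> simp
  rw [← integral_indicator measurableSet_Ici, ← integral_indicator measurableSet_Iic]
  simp_rw [hind]
  rw [integral_sub_left_eq_self (fun w => η⁻¹ • (Iic ((c - z) / η)).indicator g (w / η)),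
    integral_inv_smul_comp_div _ hη]

theorem setIntegral_Iic_inv_smul_comp_sub_div (g : ℝ → E) (hη : 0 < η) (w y : ℝ) :
    ∫ x in Iic w, η⁻¹ • g ((x - y) / η) = ∫ u in Iic ((w - y) / η), g u := by
  have hind : ∀ x, (Iic w).indicator (fun x => η⁻¹ • g ((x - y) / η)) x
      = η⁻¹ • (Iic ((w - y) / η)).indicator g ((x - y) / η) := by
    intro x
    have hmem : x ≤ w ↔ (x - y) / η ≤ (w - y) / η := by
      rw [div_le_div_iff_of_pos_right hη, sub_le_sub_iff_right]
    simp only [indicator_apply, mem_Iic, hmem]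
    split_ifs <;> simp
  rw [← integral_indicator measurableSet_Iic, ← integral_indicator measurableSet_Iic]
  simp_rw [hind]
  rw [integral_sub_right_eq_self (fun v => η⁻¹ • (Iic ((w - y) / η)).indicator g (v / η)),
    integral_inv_smul_comp_div _ hη]

end Rescaling

section Primitive

variable {f : ℝ → ℝ}

theorem Integrable.continuous_primitive_Iic (hf : Integrable f) :
    Continuous fun c => ∫ u in Iic c, f u :=
  continuous_iff_continuousAt.2 fun c =>
    (hf.integrableOn.continuousOn_Iic_primitive_Iic (a₀ := c + 1)).continuousAt
      (Iic_mem_nhds (lt_add_one c))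

theorem Integrable.norm_setIntegral_Iic_le (hf : Integrable f) (c : ℝ) :
    ‖∫ u in Iic c, f u‖ ≤ ∫ u, ‖f u‖ :=
  (norm_integral_le_integral_norm _).trans
    (setIntegral_le_integral hf.norm (Eventually.of_forall fun _ => norm_nonneg _))

end Primitive

section Fubini

variable {f g : ℝ → ℝ}

theorem integral_setIntegral_Ici_mul (hf : Integrable f) (hg : Integrable g) :
    ∫ x, (∫ w in Ici x, f w) * g x = ∫ w, f w * ∫ x in Iic w, g x := by
  have hint : Integrable (Function.uncurry fun x w => (Ici x).indicator f w * g x)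
      (volume.prod volume) := by
    refine ((hg.mul_prod hf).indicator (measurableSet_le measurable_fst measurable_snd)).congr
      (Eventually.of_forall fun p => ?_)
    simp only [Function.uncurry, indicator_apply, mem_ofPred_eq, mem_Ici]
    split_ifs <;> ring
  have hswap : ∀ x w, (Ici x).indicator f w * g x = f w * (Iic w).indicator g x := by
    intro x w
    simp only [indicator_apply, mem_Ici, mem_Iic]
    split_ifs <;> ring
  calc ∫ x, (∫ w in Ici x, f w) * g x
      = ∫ x, ∫ w, (Ici x).indicator f w * g x := by
        simp_rw [integral_mul_const, integral_indicator measurableSet_Ici]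
    _ = ∫ w, ∫ x, (Ici x).indicator f w * g x := integral_integral_swap hint
    _ = ∫ w, f w * ∫ x in Iic w, g x := by
        simp_rw [hswap, integral_const_mul, integral_indicator measurableSet_Iic]

theorem integral_mul_measureReal_Iic {μ : Measure ℝ} [IsFiniteMeasure μ] (hg : Integrable g) :
    ∫ y, g y * μ.real (Iic y) = ∫ z, (∫ y in Ici z, g y) ∂μ := by
  have hint : Integrable (Function.uncurry fun y z => g y * (Iic y).indicator 1 z)
      (volume.prod μ) := by
    refine ((hg.mul_prod (integrable_const (1 : ℝ))).indicator
      (measurableSet_le measurable_snd measurable_fst)).congr (Eventually.of_forall fun p => ?_)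
    simp only [Function.uncurry, indicator_apply, mem_ofPred_eq, mem_Iic, Pi.one_apply]
    split_ifs <;> ring
  have hswap : ∀ y z, g y * (Iic y).indicator 1 z = (Ici z).indicator g y := by
    intro y z
    simp only [indicator_apply, mem_Ici, mem_Iic, Pi.one_apply]
    split_ifs <;> ring
  calc ∫ y, g y * μ.real (Iic y)
      = ∫ y, (∫ z, g y * (Iic y).indicator 1 z ∂μ) := by
        simp_rw [integral_const_mul, integral_indicator_one measurableSet_Iic]
    _ = ∫ z, (∫ y, g y * (Iic y).indicator 1 z) ∂μ := integral_integral_swap hint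
    _ = ∫ z, (∫ y in Ici z, g y) ∂μ := by
        simp_rw [hswap, integral_indicator measurableSet_Ici]

theorem Integrable.mul_comp_sub_prod {Φ : ℝ → ℝ} {C : ℝ} {μ : Measure ℝ} [IsFiniteMeasure μ]
    (hf : Integrable f) (hΦ : Continuous Φ) (hC : ∀ v, ‖Φ v‖ ≤ C) :
    Integrable (Function.uncurry fun x y => f x * Φ (x - y)) (volume.prod μ) :=
  (hf.comp_fst μ).mul_bdd (hΦ.comp continuous_sub).aestronglyMeasurable
    (Eventually.of_forall fun _ => hC _)

end Fubini

end MeasureTheory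

theorem bootstrap_bias_identity_general
    (K : ℝ → ℝ)
    (hKint : ∫ x, K x = 1)
    (μ : Measure ℝ) [IsProbabilityMeasure μ]
    (F : ℝ → ℝ) (hF : ∀ x, F x = (μ (Set.Iic x)).toReal)
    (t h h₀ : ℝ) (hh : 0 < h) (hh₀ : 0 < h₀) :
    (∫ y, ((∫ x, (∫ u in Set.Iic ((t - x) / h), K u) * (h₀⁻¹ * K ((x - y) / h₀)))
        - ∫ u in Set.Iic ((t - y) / h₀), K u) ∂μ)
      = (∫ x, (h⁻¹ * K ((t - x) / h)) * ∫ y, (h₀⁻¹ * K ((x - y) / h₀)) * F y)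
        - ∫ y, (h₀⁻¹ * K ((t - y) / h₀)) * F y := by
  have hKi : Integrable K := .of_integral_ne_zero (by simp [hKint])
  have hker : ∀ η ≠ 0, ∀ c, Integrable fun y => η⁻¹ * K ((c - y) / η) := fun η hη c =>
    ((hKi.comp_div hη).comp_sub_left c).const_mul _
  have hIci : ∀ η > 0, ∀ c z, ∫ y in Ici z, η⁻¹ * K ((c - y) / η)
      = ∫ u in Iic ((c - z) / η), K u := fun η hη => setIntegral_Ici_inv_smul_comp_sub_div K hη
  have hIic : ∀ w y, ∫ x in Iic w, h₀⁻¹ * K ((x - y) / h₀)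
      = ∫ u in Iic ((w - y) / h₀), K u := setIntegral_Iic_inv_smul_comp_sub_div K hh₀
  have hparts : ∀ y, ∫ x, (∫ u in Iic ((t - x) / h), K u) * (h₀⁻¹ * K ((x - y) / h₀))
      = ∫ x, (h⁻¹ * K ((t - x) / h)) * ∫ u in Iic ((x - y) / h₀), K u := fun y => by
    simpa only [hIci h hh, hIic] using integral_setIntegral_Ici_mul (hker h hh.ne' t)
      (((hKi.comp_div hh₀.ne').comp_sub_right y).const_mul h₀⁻¹)
  have hsmooth : ∀ c, ∫ y, (h₀⁻¹ * K ((c - y) / h₀)) * F y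
      = ∫ z, (∫ u in Iic ((c - z) / h₀), K u) ∂μ := fun c => by
    simpa only [hF, ← measureReal_def, hIci h₀ hh₀]
      using integral_mul_measureReal_Iic (μ := μ) (hker h₀ hh₀.ne' c)
  have hIK : Continuous fun v => ∫ u in Iic (v / h₀), K u :=
    hKi.continuous_primitive_Iic.comp (continuous_id.div_const _)
  have hprod := (hker h hh.ne' t).mul_comp_sub_prod (μ := μ) hIK
    fun _ => hKi.norm_setIntegral_Iic_le _
  have hA : Integrable (fun y => ∫ x, (h⁻¹ * K ((t - x) / h)) * ∫ u in Iic ((x - y) / h₀), K u)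
      μ := hprod.integral_prod_right
  have hB : Integrable (fun y => ∫ u in Iic ((t - y) / h₀), K u) μ :=
    .of_bound (hIK.comp (continuous_sub_left t)).aestronglyMeasurable _
      (Eventually.of_forall fun _ => hKi.norm_setIntegral_Iic_le _)
  simp_rw [hparts, hsmooth]
  rw [integral_sub hA hB, ← integral_integral_swap hprod]
  simp_rw [integral_const_mul]

/-- Conditional-bias identity for the smoothed bootstrap: for a continuously
differentiable probability density `K` supported on `[−1,1]`, a compactly supported
probability measure `μ` with distribution function `F`, and
`𝔽_{h₀}(x) = ∫ K_{h₀}(x − y) F(y) dy`, one has for all `t` and `h, h₀ > 0`: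
`∫ [ ∫ IK_h(t − x) K_{h₀}(x − y) dx − IK_{h₀}(t − y) ] dμ(y)
  = ∫ K_h(t − x) 𝔽_{h₀}(x) dx − 𝔽_{h₀}(t)`. -/
theorem bootstrap_bias_identity
    (K : ℝ → ℝ) (hK : ContDiff ℝ 1 K)
    (hKsupp : ∀ x, x ∉ Set.Icc (-1 : ℝ) 1 → K x = 0)
    (hKnonneg : ∀ x, 0 ≤ K x)
    (hKint : ∫ x, K x = 1)
    (μ : Measure ℝ) [IsProbabilityMeasure μ]
    (hμsupp : ∃ s : Set ℝ, IsCompact s ∧ μ sᶜ = 0)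
    (F : ℝ → ℝ) (hF : ∀ x, F x = (μ (Set.Iic x)).toReal)
    (t h h₀ : ℝ) (hh : 0 < h) (hh₀ : 0 < h₀) :
    (∫ y, ((∫ x, (∫ u in Set.Iic ((t - x) / h), K u) * (h₀⁻¹ * K ((x - y) / h₀)))
        - ∫ u in Set.Iic ((t - y) / h₀), K u) ∂μ)
      = (∫ x, (h⁻¹ * K ((t - x) / h)) * ∫ y, (h₀⁻¹ * K ((x - y) / h₀)) * F y)
        - ∫ y, (h₀⁻¹ * K ((t - y) / h₀)) * F y :=
  bootstrap_bias_identity_general K hKint μ F hF t h h₀ hh hh₀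
end

section
/- Let ε > 0 and M_1 > 0. There exists a constant C = C(ε, M_1) > 0 such that for all measurable functions F, G : ℝ → [0, 1] with F(x) = G(x) = 0 for all x < 0, ∫_0^{M_1} ( F(s) − G(s) )² ds ≤ C ∫_ε^{2ε} ∫_0^{M_1} ( F(s) − F(s − e) − G(s) + G(s − e) )² ds de. -/
/-!
Put `D = F - G`, which is bounded, measurable and vanishes on `(-∞, 0)`. Fix a lag
`e ∈ (ε, 2ε]` and `n = ⌈M₁/ε⌉₊ + 1`, so that `s - n e < 0` for `s ≤ M₁`. Then `D s` telescopes
into the `n` increments `D (s - j e) - D (s - (j+1) e)`, and Cauchy–Schwarz bounds `D s ^ 2` by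
`n` times the sum of their squares. Each increment is the increment at `s` shifted right by
`j e`; the squared increment vanishes on `(-∞, 0)`, so shifting it right does not increase its
integral over `(0, M₁]`. Hence `∫ D² ≤ n² ∫ (D s - D (s - e))²` for every such `e`, and averaging
over `e ∈ (ε, 2ε]` gives the constant `n² / ε`.
-/

open MeasureTheory Set

lemma integrable_sq_of_abs_le {α : Type*} [MeasurableSpace α] {μ : Measure α} [IsFiniteMeasure μ]
    {f : α → ℝ} {B : ℝ} (hb : ∀ x, |f x| ≤ B) (hf : Measurable f) :
    Integrable (fun x => f x ^ 2) μ :=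
  Integrable.of_bound (hf.pow_const 2).aestronglyMeasurable (B ^ 2) <| ae_of_all _ fun x => by
    rw [Real.norm_eq_abs, abs_pow]
    exact pow_le_pow_left₀ (abs_nonneg _) (hb x) 2

lemma setIntegral_Ioc_comp_sub_le {f : ℝ → ℝ} {M t : ℝ} (hf₀ : ∀ x, 0 ≤ f x)
    (hneg : ∀ x < 0, f x = 0) (hf : IntegrableOn f (Icc 0 M)) (ht : 0 ≤ t) :
    ∫ s in Ioc 0 M, f (s - t) ≤ ∫ s in Ioc 0 M, f s := by
  -- `Icc` rather than `Ioc`: `f 0` need not vanish.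
  set g := (Icc 0 M).indicator f
  have hg : Integrable g := hf.integrable_indicator measurableSet_Icc
  have hg₀ : 0 ≤ g := indicator_nonneg fun x _ => hf₀ x
  calc ∫ s in Ioc 0 M, f (s - t)
      ≤ ∫ s in Ioc 0 M, g (s - t) := by
        refine integral_mono_of_nonneg (ae_of_all _ fun s => hf₀ _)
          (hg.comp_sub_right t).integrableOn ?_
        filter_upwards [ae_restrict_mem measurableSet_Ioc] with s hs
        by_cases h : s - t ∈ Icc 0 M
        · exact (indicator_of_mem h f).ge
        · have : s - t < 0 := by
            by_contra! h'
            exact h ⟨h', by linarith [hs.2]⟩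
          rw [hneg _ this]
          exact hg₀ _
    _ ≤ ∫ s, g (s - t) :=
        setIntegral_le_integral (hg.comp_sub_right t) (ae_of_all _ fun s => hg₀ (s - t))
    _ = ∫ s, g s := integral_sub_right_eq_self g t
    _ = ∫ s in Icc 0 M, f s := integral_indicator measurableSet_Icc
    _ = ∫ s in Ioc 0 M, f s := integral_Icc_eq_integral_Ioc

section Increments

variable {D : ℝ → ℝ} {B : ℝ}

lemma eq_sum_range_sub_shift (hD : ∀ x < 0, D x = 0) {s e : ℝ} {n : ℕ} (hs : s < n * e) :
    D s = ∑ j ∈ Finset.range n, (D (s - j * e) - D (s - j * e - e)) := by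
  have h := Finset.sum_range_sub' (fun j : ℕ => D (s - j * e)) n
  simp only [Nat.cast_zero, zero_mul, sub_zero, Nat.cast_succ, add_mul, one_mul, ← sub_sub,
    hD (s - n * e) (by linarith)] at h
  exact h.symm

lemma sq_le_mul_sum_sq_sub_shift (hD : ∀ x < 0, D x = 0) {s e : ℝ} {n : ℕ} (hs : s < n * e) :
    D s ^ 2 ≤ n * ∑ j ∈ Finset.range n, (D (s - j * e) - D (s - j * e - e)) ^ 2 := by
  rw [eq_sum_range_sub_shift hD hs]
  simpa using sq_sum_le_card_mul_sum_sq (s := Finset.range n)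
    (f := fun j : ℕ => D (s - j * e) - D (s - j * e - e))

lemma abs_sub_shift_le (hDb : ∀ x, |D x| ≤ B) (x e : ℝ) : |D x - D (x - e)| ≤ B + B :=
  (abs_sub _ _).trans (add_le_add (hDb _) (hDb _))

lemma integrable_sq_sub_shift (hDm : Measurable D) (hDb : ∀ x, |D x| ≤ B) {μ : Measure ℝ}
    [IsFiniteMeasure μ] (t e : ℝ) : Integrable (fun s => (D (s - t) - D (s - t - e)) ^ 2) μ := by
  have hshift := measurable_id.sub_const (α := ℝ) t
  exact integrable_sq_of_abs_le (fun s => abs_sub_shift_le hDb (s - t) e)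
    ((hDm.comp hshift).sub (hDm.comp (hshift.sub_const e)))

lemma setIntegral_sq_le_mul_setIntegral_sq_sub_shift (hDm : Measurable D) (hDb : ∀ x, |D x| ≤ B)
    (hD : ∀ x < 0, D x = 0) {M e : ℝ} {n : ℕ} (he : 0 ≤ e) (hn : M < n * e) :
    ∫ s in Ioc 0 M, D s ^ 2 ≤ n ^ 2 * ∫ s in Ioc 0 M, (D s - D (s - e)) ^ 2 := by
  have hint := integrable_sq_sub_shift (μ := volume.restrict (Ioc 0 M)) hDm hDb
  calc ∫ s in Ioc 0 M, D s ^ 2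
      ≤ ∫ s in Ioc 0 M, n * ∑ j ∈ Finset.range n, (D (s - j * e) - D (s - j * e - e)) ^ 2 := by
        refine integral_mono_of_nonneg (ae_of_all _ fun s => sq_nonneg _)
          ((integrable_finsetSum _ fun j _ => hint _ e).const_mul _) ?_
        filter_upwards [ae_restrict_mem measurableSet_Ioc] with s hs
        exact sq_le_mul_sum_sq_sub_shift hD (hs.2.trans_lt hn)
    _ = n * ∑ j ∈ Finset.range n, ∫ s in Ioc 0 M, (D (s - j * e) - D (s - j * e - e)) ^ 2 := by
        rw [integral_const_mul, integral_finsetSum _ fun j _ => hint _ e]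
    _ ≤ n * ∑ j ∈ Finset.range n, ∫ s in Ioc 0 M, (D s - D (s - e)) ^ 2 := by
        refine mul_le_mul_of_nonneg_left (Finset.sum_le_sum fun j _ => ?_) (Nat.cast_nonneg n)
        refine setIntegral_Ioc_comp_sub_le (f := fun u => (D u - D (u - e)) ^ 2)
          (fun _ => sq_nonneg _) (fun x hx => ?_) ?_ (by positivity)
        · simp [hD x hx, hD (x - e) (by linarith)]
        · simpa [IntegrableOn] using
            integrable_sq_sub_shift (μ := volume.restrict (Icc 0 M)) hDm hDb 0 e
    _ = n ^ 2 * ∫ s in Ioc 0 M, (D s - D (s - e)) ^ 2 := by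
        rw [Finset.sum_const, Finset.card_range, nsmul_eq_mul]
        ring

lemma measurable_setIntegral_sq_sub_shift (hDm : Measurable D) (M : ℝ) :
    Measurable fun e => ∫ s in Ioc 0 M, (D s - D (s - e)) ^ 2 := by
  have h : Measurable fun p : ℝ × ℝ => (D p.2 - D (p.2 - p.1)) ^ 2 :=
    ((hDm.comp measurable_snd).sub (hDm.comp (measurable_snd.sub measurable_fst))).pow_const 2
  exact (h.stronglyMeasurable.integral_prod_right' (ν := volume.restrict (Ioc 0 M))).measurable

lemma integrableOn_setIntegral_sq_sub_shift (hDm : Measurable D) (hDb : ∀ x, |D x| ≤ B)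
    (M a b : ℝ) : IntegrableOn (fun e => ∫ s in Ioc 0 M, (D s - D (s - e)) ^ 2) (Ioc a b) := by
  refine Integrable.of_bound (measurable_setIntegral_sq_sub_shift hDm M).aestronglyMeasurable
    ((B + B) ^ 2 * volume.real (Ioc 0 M)) (ae_of_all _ fun e => ?_)
  refine norm_setIntegral_le_of_norm_le_const measure_Ioc_lt_top fun s _ => ?_
  rw [Real.norm_eq_abs, abs_pow]
  exact pow_le_pow_left₀ (abs_nonneg _) (abs_sub_shift_le hDb s e) 2

theorem setIntegral_sq_le_mul_integral_setIntegral_sq_sub_shift (hDm : Measurable D)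
    (hDb : ∀ x, |D x| ≤ B) (hD : ∀ x < 0, D x = 0) {M a b : ℝ} (ha : 0 < a) (hab : a < b) :
    ∫ s in Ioc 0 M, D s ^ 2 ≤
      (⌈M / a⌉₊ + 1) ^ 2 / (b - a) * ∫ e in Ioc a b, ∫ s in Ioc 0 M, (D s - D (s - e)) ^ 2 := by
  have hn : ∀ e ∈ Ioc a b, M < ((⌈M / a⌉₊ + 1 : ℕ) : ℝ) * e := fun e he =>
    calc M ≤ ⌈M / a⌉₊ * a := (div_le_iff₀ ha).1 (Nat.le_ceil _)
      _ < (⌈M / a⌉₊ + 1 : ℕ) * a := by push_cast; linarith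
      _ ≤ (⌈M / a⌉₊ + 1 : ℕ) * e := by gcongr; exact he.1.le
  have havg := setIntegral_ge_of_const_le_real measurableSet_Ioc measure_Ioc_lt_top.ne
    (fun e he => setIntegral_sq_le_mul_setIntegral_sq_sub_shift hDm hDb hD (ha.trans he.1).le
      (hn e he)) ((integrableOn_setIntegral_sq_sub_shift hDm hDb M a b).const_mul _)
  rw [Real.volume_real_Ioc_of_le hab.le, integral_const_mul] at havg
  push_cast at havg
  rw [div_mul_eq_mul_div, le_div_iff₀ (sub_pos.2 hab)]
  exact havg

end Increments

theorem increment_L2_bound_general (ε M₁ : ℝ) (hε : 0 < ε) :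
    ∃ C > (0 : ℝ), ∀ F G : ℝ → ℝ, Measurable F → Measurable G →
      (∀ x, F x ∈ Set.Icc (0 : ℝ) 1) → (∀ x, G x ∈ Set.Icc (0 : ℝ) 1) →
      (∀ x < (0 : ℝ), F x = 0) → (∀ x < (0 : ℝ), G x = 0) →
      (∫ s in Set.Ioc 0 M₁, (F s - G s) ^ 2) ≤
        C * ∫ e in Set.Ioc ε (2 * ε),
              ∫ s in Set.Ioc 0 M₁, (F s - F (s - e) - G s + G (s - e)) ^ 2 := by
  refine ⟨(⌈M₁ / ε⌉₊ + 1) ^ 2 / ε, by positivity, fun F G hF hG hF01 hG01 hF0 hG0 => ?_⟩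
  have h := setIntegral_sq_le_mul_integral_setIntegral_sq_sub_shift
    (D := fun x => F x - G x) (M := M₁)
    (hF.sub hG) (fun x => abs_sub_le_of_nonneg_of_le (hF01 x).1 (hF01 x).2 (hG01 x).1 (hG01 x).2)
    (fun x hx => by simp [hF0 x hx, hG0 x hx]) hε (by linarith : ε < 2 * ε)
  rw [show 2 * ε - ε = ε by ring] at h
  convert h using 6
  ring

/-- Deterministic inequality propagating an L² bound on increments `F(s) − F(s−e)` to an
L² bound on `F − G`: there is a constant `C = C(ε, M₁) > 0` such that for all measurable
`F, G : ℝ → [0,1]` vanishing on `(-∞, 0)`,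
`∫_0^{M₁} (F − G)² ≤ C ∫_ε^{2ε} ∫_0^{M₁} (F(s) − F(s−e) − G(s) + G(s−e))² ds de`. -/
theorem increment_L2_bound (ε M₁ : ℝ) (hε : 0 < ε) (hM₁ : 0 < M₁) :
    ∃ C > (0 : ℝ), ∀ F G : ℝ → ℝ, Measurable F → Measurable G →
      (∀ x, F x ∈ Set.Icc (0 : ℝ) 1) → (∀ x, G x ∈ Set.Icc (0 : ℝ) 1) →
      (∀ x < (0 : ℝ), F x = 0) → (∀ x < (0 : ℝ), G x = 0) →
      (∫ s in Set.Ioc 0 M₁, (F s - G s) ^ 2) ≤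
        C * ∫ e in Set.Ioc ε (2 * ε),
              ∫ s in Set.Ioc 0 M₁, (F s - F (s - e) - G s + G (s - e)) ^ 2 :=
  increment_L2_bound_general ε M₁ hε
end

section
/- Let F_0 be a distribution function with F_0(0) = 0, F_0(M_1) = 1 and a continuous density f_0 on [0, M_1], and let F_E be a probability distribution concentrated on [ε, M_2] for some ε > 0. Let a ∈ L²(F_0) with ∫ a dF_0 = 0 and set φ(u) = ∫_{[0, u]} a dF_0, so that φ(0) = φ(M_1) = 0. Adopt the conventions φ(s) = φ(M_1), F_0(s) = 1 for s > M_1; φ(s) = F_0(s) = 0 for s < 0; and integrands equal to 0 where F_0(s) − F_0(s−e) = 0. If for every v ∈ [0, M_1], ∫ e^{-1} ∫_{s ∈ (v, v+e)} ( φ(s) − φ(s − e) ) / ( F_0(s) − F_0(s − e) ) ds dF_E(e) = v − ∫_0^{M_1} x dF_0(x), then ∫ e^{-1} ∫_ℝ ( φ(s) − φ(s − e) )² / ( F_0(s) − F_0(s − e) ) ds dF_E(e) = − ∫_0^{M_1} φ(u) du. -/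
/-!
Write `θ̃(e, s)` for the canonical gradient and `m = ∫ x dF₀`. As
`φ(s) − φ(s − e) = ∫_{(s−e, s]} a dF₀` and `F₀(s) − F₀(s − e) = F₀((s − e, s])`, Fubini for
the kernel `θ̃(e, s) a(v) 1{s − e < v ≤ s}` in `(s, v)` turns
`∫ (φ(s) − φ(s − e))² / (F₀(s) − F₀(s − e)) ds` into `∫ a(v) ∫_{(v, v+e)} θ̃(e, s) ds dF₀(v)`.
Fubini in `(e, v)` and the hypothesis then give `∫ a(v) (v − m) dF₀(v) = ∫ a(v) v dF₀(v)`, as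
`a` has mean zero, and Fubini in `(u, v)` gives
`∫_0^{M₁} φ = ∫ a(v) (M₁ − v) dF₀(v) = −∫ a(v) v dF₀(v)`.

The interchanges rest on Cauchy–Schwarz, `(∫_{(s−e, s]} |a| dF₀)² ≤ ‖a‖₂² (F₀(s) − F₀(s − e))`:
it bounds the kernel's `v`-integral by `‖a‖₂²`, the kernel vanishes unless `s ∈ [0, M₁ + e]`,
and `e⁻¹ ≤ ε⁻¹` makes the resulting bound uniform in `e`.
-/
open MeasureTheory Filter Set

/-- With Lean's `x / 0 = 0`, this is zero where `F s = F (s - e)`, which is the paper's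
convention for the integrands. -/
noncomputable def canonicalGradient (φ F : ℝ → ℝ) (e s : ℝ) : ℝ :=
  (φ s - φ (s - e)) / (F s - F (s - e))

section CauchySchwarz

variable {α : Type*} [MeasurableSpace α] {μ : Measure α} [IsFiniteMeasure μ] {b : α → ℝ}

lemma sq_setIntegral_abs_le (hb : MemLp b 2 μ) (S : Set α) :
    (∫ v in S, |b v| ∂μ) ^ 2 ≤ μ.real S * ∫ v, b v ^ 2 ∂μ := by
  have holder := integral_mul_le_Lp_mul_Lq_of_nonneg (μ := μ.restrict S)
    Real.HolderConjugate.two_two (Eventually.of_forall fun v => abs_nonneg (b v))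
    (Eventually.of_forall fun _ => zero_le_one)
    (by rw [ENNReal.ofReal_ofNat]; exact (hb.restrict S).abs) (memLp_const 1)
  simp only [mul_one, one_pow, integral_const, smul_eq_mul, measureReal_restrict_apply_univ,
    Real.rpow_two, sq_abs, ← Real.sqrt_eq_rpow] at holder
  have hsq : ∫ v in S, b v ^ 2 ∂μ ≤ ∫ v, b v ^ 2 ∂μ :=
    setIntegral_le_integral hb.integrable_sq (Eventually.of_forall fun v => sq_nonneg (b v))
  calc (∫ v in S, |b v| ∂μ) ^ 2
      ≤ (√(∫ v in S, b v ^ 2 ∂μ) * √(μ.real S)) ^ 2 := by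
        gcongr
    _ = (∫ v in S, b v ^ 2 ∂μ) * μ.real S := by
        rw [mul_pow, Real.sq_sqrt (integral_nonneg fun v => sq_nonneg (b v)),
          Real.sq_sqrt measureReal_nonneg]
    _ ≤ μ.real S * ∫ v, b v ^ 2 ∂μ := by
        rw [mul_comm]; exact mul_le_mul_of_nonneg_left hsq measureReal_nonneg

end CauchySchwarz

section DistributionFunction

variable {μ : Measure ℝ} [IsFiniteMeasure μ] {F : ℝ → ℝ}

lemma monotone_of_measureReal_Iic (hF : ∀ x, μ.real (Iic x) = F x) : Monotone F :=
  fun x y hxy => hF x ▸ hF y ▸ measureReal_mono (Iic_subset_Iic.2 hxy)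

lemma sub_eq_measureReal_Ioc (hF : ∀ x, μ.real (Iic x) = F x) {x y : ℝ} (hxy : x ≤ y) :
    F y - F x = μ.real (Ioc x y) := by
  rw [← hF, ← hF, ← Iic_sdiff_Iic, measureReal_sdiff (Iic_subset_Iic.2 hxy) measurableSet_Iic]

lemma mem_Icc_of_measureReal_Ioc_ne_zero {M e s : ℝ} (hμ : ∀ᵐ v ∂μ, v ∈ Icc 0 M)
    (hs : μ.real (Ioc (s - e) s) ≠ 0) : s ∈ Icc 0 (M + e) := by
  have hnull : μ (Icc 0 M)ᶜ = 0 := mem_ae_iff.1 hμ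
  by_contra hs'
  have hsub : Ioc (s - e) s ⊆ (Icc 0 M)ᶜ := fun v hv hvM =>
    hs' ⟨hvM.1.trans hv.2, by linarith [hv.1, hvM.2]⟩
  exact hs ((measureReal_eq_zero_iff).2 (measure_mono_null hsub hnull))

end DistributionFunction

lemma ae_mem_Icc_of_measureReal_Iic {μ : Measure ℝ} [IsProbabilityMeasure μ] {F : ℝ → ℝ}
    {M : ℝ} (hF : ∀ x, μ.real (Iic x) = F x) (hF0 : F 0 = 0) (hFM : F M = 1) :
    ∀ᵐ v ∂μ, v ∈ Icc 0 M := by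
  have hpos : ∀ᵐ v ∂μ, v ∉ Iic 0 :=
    measure_eq_zero_iff_ae_notMem.1 ((measureReal_eq_zero_iff).1 ((hF 0).trans hF0))
  have hle : ∀ᵐ v ∂μ, v ∈ Iic M := by
    rw [ae_mem_iff_measure_eq measurableSet_Iic.nullMeasurableSet, measure_univ,
      ← ENNReal.toReal_eq_one_iff]
    exact (hF M).trans hFM
  filter_upwards [hpos, hle] with v hv0 hvM
  exact ⟨(not_le.1 hv0).le, hvM⟩

section CumulativeIntegral

variable {μ : Measure ℝ} {b ψ : ℝ → ℝ}

lemma monotone_setIntegral_Iic (hb : Integrable b μ) (hb0 : 0 ≤ᵐ[μ] b) :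
    Monotone fun u => ∫ v in Iic u, b v ∂μ :=
  fun _ _ hxy => setIntegral_mono_set hb.integrableOn (ae_restrict_of_ae hb0)
    (Iic_subset_Iic.2 hxy).eventuallyLE

lemma measurable_setIntegral_Iic (hb : Integrable b μ) :
    Measurable fun u => ∫ v in Iic u, b v ∂μ := by
  have hsplit : (fun u => ∫ v in Iic u, b v ∂μ)
      = fun u => (∫ v in Iic u, (|b v| + b v) ∂μ) - ∫ v in Iic u, |b v| ∂μ := by
    funext u
    rw [integral_add hb.abs.integrableOn hb.integrableOn]
    ring
  rw [hsplit]
  refine (monotone_setIntegral_Iic (hb.abs.add hb) ?_).measurable.sub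
    (monotone_setIntegral_Iic hb.abs ?_).measurable
  · exact Eventually.of_forall fun v => by
      simp only [Pi.zero_apply, Pi.add_apply]
      linarith [neg_abs_le (b v)]
  · exact Eventually.of_forall fun v => abs_nonneg (b v)

lemma sub_eq_setIntegral_Ioc (hb : Integrable b μ) (hψ : ∀ u, ψ u = ∫ v in Iic u, b v ∂μ)
    {x y : ℝ} (hxy : x ≤ y) : ψ y - ψ x = ∫ v in Ioc x y, b v ∂μ := by
  rw [hψ, hψ, ← Iic_sdiff_Iic,
    setIntegral_sdiff measurableSet_Iic hb.integrableOn (Iic_subset_Iic.2 hxy)]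

lemma setIntegral_Icc_zero_eq_setIntegral_Iic (hμ : ∀ᵐ v ∂μ, 0 ≤ v) (f : ℝ → ℝ) (u : ℝ) :
    ∫ v in Icc 0 u, f v ∂μ = ∫ v in Iic u, f v ∂μ := by
  refine setIntegral_congr_set ?_
  filter_upwards [hμ] with v hv
  change (v ∈ Icc 0 u) = (v ∈ Iic u)
  simp [hv]

end CumulativeIntegral

lemma integral_norm_const_mul_indicator {α : Type*} [MeasurableSpace α] {μ : Measure α}
    {t : Set α} (ht : MeasurableSet t) (c : ℝ) (b : α → ℝ) :
    ∫ v, ‖c * t.indicator b v‖ ∂μ = ‖c‖ * ∫ v in t, ‖b v‖ ∂μ := by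
  simp only [norm_mul, norm_indicator_eq_indicator_norm]
  rw [integral_const_mul, integral_indicator ht]

lemma integral_mul_indicator_Ioc_sub (f b : ℝ → ℝ) (e v : ℝ) :
    ∫ s, f s * (Ioc (s - e) s).indicator b v = b v * ∫ s in Ioo v (v + e), f s := by
  have hslice : (fun s => f s * (Ioc (s - e) s).indicator b v)
      = (Ico v (v + e)).indicator fun s => f s * b v := by
    funext s
    by_cases hs : s ∈ Ico v (v + e)
    · rw [indicator_of_mem hs, indicator_of_mem (show v ∈ Ioc (s - e) s from
        ⟨by linarith [hs.2], hs.1⟩)]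
    · rw [indicator_of_notMem hs, indicator_of_notMem (show v ∉ Ioc (s - e) s from
        fun hv => hs ⟨hv.2, by linarith [hv.1]⟩), mul_zero]
  rw [hslice, integral_indicator measurableSet_Ico, integral_Ico_eq_integral_Ioo,
    integral_mul_const, mul_comm]

lemma measurable_canonicalGradient {ψ F : ℝ → ℝ} (hψ : Measurable ψ) (hF : Measurable F) :
    Measurable (Function.uncurry (canonicalGradient ψ F)) :=
  ((hψ.comp measurable_snd).sub (hψ.comp (measurable_snd.sub measurable_fst))).div
    ((hF.comp measurable_snd).sub (hF.comp (measurable_snd.sub measurable_fst)))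

lemma measurable_setIntegral_Ioo_add {f : ℝ → ℝ → ℝ} (hf : Measurable (Function.uncurry f)) :
    Measurable fun p : ℝ × ℝ => ∫ s in Ioo p.2 (p.2 + p.1), f p.1 s := by
  have hind : Measurable fun q : (ℝ × ℝ) × ℝ =>
      (Ioo q.1.2 (q.1.2 + q.1.1)).indicator (f q.1.1) q.2 := by
    simp only [indicator_apply, mem_Ioo]
    exact Measurable.ite ((measurableSet_lt measurable_fst.snd measurable_snd).inter
        (measurableSet_lt measurable_snd (measurable_fst.snd.add measurable_fst.fst)))
      (hf.comp (measurable_fst.fst.prodMk measurable_snd)) measurable_const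
  simp only [← integral_indicator measurableSet_Ioo]
  exact hind.stronglyMeasurable.integral_prod_right'.measurable

lemma integrable_indicator_Icc_const (x y c : ℝ) :
    Integrable ((Icc x y).indicator fun _ => c) volume :=
  (integrableOn_const measure_Icc_lt_top.ne).integrable_indicator measurableSet_Icc

noncomputable def gradientKernel (ψ F b : ℝ → ℝ) (e : ℝ) (p : ℝ × ℝ) : ℝ :=
  canonicalGradient ψ F e p.1 * (Ioc (p.1 - e) p.1).indicator b p.2

section GradientKernel

variable {μ : Measure ℝ} [IsFiniteMeasure μ] {b ψ F : ℝ → ℝ} {M e : ℝ}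

lemma abs_canonicalGradient_mul_le (hμ : ∀ᵐ v ∂μ, v ∈ Icc 0 M) (hb : MemLp b 2 μ)
    (hψ : ∀ u, ψ u = ∫ v in Iic u, b v ∂μ) (hF : ∀ x, μ.real (Iic x) = F x) (he : 0 < e)
    (s : ℝ) :
    |canonicalGradient ψ F e s| * ∫ v in Ioc (s - e) s, |b v| ∂μ
      ≤ (Icc 0 (M + e)).indicator (fun _ => ∫ v, b v ^ 2 ∂μ) s := by
  have hse : s - e ≤ s := by linarith
  set D := μ.real (Ioc (s - e) s)
  set I := ∫ v in Ioc (s - e) s, |b v| ∂μ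
  have hθ : canonicalGradient ψ F e s = (∫ v in Ioc (s - e) s, b v ∂μ) / D := by
    rw [canonicalGradient, sub_eq_setIntegral_Ioc (hb.integrable one_le_two) hψ hse,
      sub_eq_measureReal_Ioc hF hse]
  rcases eq_or_ne D 0 with hD | hD
  · rw [hθ, hD, div_zero, abs_zero, zero_mul]
    exact indicator_nonneg (fun _ _ => integral_nonneg fun v => sq_nonneg (b v)) s
  rw [indicator_of_mem (mem_Icc_of_measureReal_Ioc_ne_zero hμ hD)]
  have hDpos : 0 < D := measureReal_nonneg.lt_of_ne hD.symm
  calc |canonicalGradient ψ F e s| * I ≤ I / D * I := by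
        rw [hθ, abs_div, abs_of_pos hDpos]
        gcongr
        exact abs_integral_le_integral_abs
    _ = I ^ 2 / D := by ring
    _ ≤ ∫ v, b v ^ 2 ∂μ := by
        rw [div_le_iff₀ hDpos, mul_comm]
        exact sq_setIntegral_abs_le hb _

lemma aestronglyMeasurable_gradientKernel (hb : MemLp b 2 μ)
    (hψ : ∀ u, ψ u = ∫ v in Iic u, b v ∂μ) (hF : ∀ x, μ.real (Iic x) = F x) (e : ℝ) :
    AEStronglyMeasurable (gradientKernel ψ F b e) (volume.prod μ) := by
  have hψm : Measurable ψ :=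
    (funext hψ : ψ = _) ▸ measurable_setIntegral_Iic (hb.integrable one_le_two)
  have hθ : Measurable (canonicalGradient ψ F e) :=
    (measurable_canonicalGradient hψm
      (monotone_of_measureReal_Iic hF).measurable).of_uncurry_left
  have hS : MeasurableSet {p : ℝ × ℝ | p.2 ∈ Ioc (p.1 - e) p.1} :=
    (measurableSet_lt (measurable_fst.sub_const e) measurable_snd).inter
      (measurableSet_le measurable_snd measurable_fst)
  exact (hθ.comp measurable_fst).aestronglyMeasurable.mul (hb.1.comp_snd.indicator hS)

lemma integral_norm_gradientKernel_le (hμ : ∀ᵐ v ∂μ, v ∈ Icc 0 M) (hb : MemLp b 2 μ)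
    (hψ : ∀ u, ψ u = ∫ v in Iic u, b v ∂μ) (hF : ∀ x, μ.real (Iic x) = F x) (he : 0 < e)
    (s : ℝ) :
    ∫ v, ‖gradientKernel ψ F b e (s, v)‖ ∂μ
      ≤ (Icc 0 (M + e)).indicator (fun _ => ∫ v, b v ^ 2 ∂μ) s := by
  simp only [gradientKernel]
  rw [integral_norm_const_mul_indicator measurableSet_Ioc]
  simpa only [Real.norm_eq_abs] using abs_canonicalGradient_mul_le hμ hb hψ hF he s

lemma integrable_gradientKernel (hμ : ∀ᵐ v ∂μ, v ∈ Icc 0 M) (hb : MemLp b 2 μ)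
    (hψ : ∀ u, ψ u = ∫ v in Iic u, b v ∂μ) (hF : ∀ x, μ.real (Iic x) = F x) (he : 0 < e) :
    Integrable (gradientKernel ψ F b e) (volume.prod μ) := by
  refine (integrable_prod_iff (aestronglyMeasurable_gradientKernel hb hψ hF e)).2
    ⟨Eventually.of_forall fun s => ?_, ?_⟩
  · simp only [gradientKernel]
    exact ((hb.integrable one_le_two).indicator measurableSet_Ioc).const_mul _
  · refine Integrable.mono' (integrable_indicator_Icc_const 0 (M + e) (∫ v, b v ^ 2 ∂μ))
      (aestronglyMeasurable_gradientKernel hb hψ hF e).norm.integral_prod_right'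
      (Eventually.of_forall fun s => ?_)
    rw [Real.norm_of_nonneg (integral_nonneg fun v => norm_nonneg _)]
    exact integral_norm_gradientKernel_le hμ hb hψ hF he s

lemma integral_norm_integral_gradientKernel_le (hμ : ∀ᵐ v ∂μ, v ∈ Icc 0 M) (hM : 0 ≤ M)
    (hb : MemLp b 2 μ) (hψ : ∀ u, ψ u = ∫ v in Iic u, b v ∂μ) (hF : ∀ x, μ.real (Iic x) = F x)
    (he : 0 < e) :
    ∫ v, ‖∫ s, gradientKernel ψ F b e (s, v)‖ ∂μ ≤ (∫ v, b v ^ 2 ∂μ) * (M + e) := by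
  have hK := integrable_gradientKernel hμ hb hψ hF he
  calc ∫ v, ‖∫ s, gradientKernel ψ F b e (s, v)‖ ∂μ
      ≤ ∫ v, (∫ s, ‖gradientKernel ψ F b e (s, v)‖) ∂μ :=
        integral_mono hK.integral_prod_right.norm hK.norm.integral_prod_right
          fun v => norm_integral_le_integral_norm _
    _ = ∫ s, ∫ v, ‖gradientKernel ψ F b e (s, v)‖ ∂μ :=
        (integral_integral_swap hK.norm).symm
    _ ≤ ∫ s, (Icc 0 (M + e)).indicator (fun _ => ∫ v, b v ^ 2 ∂μ) s :=
        integral_mono hK.norm.integral_prod_left (integrable_indicator_Icc_const 0 (M + e) _)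
          (integral_norm_gradientKernel_le hμ hb hψ hF he)
    _ = (∫ v, b v ^ 2 ∂μ) * (M + e) := by
        rw [integral_indicator_const _ measurableSet_Icc,
          Real.volume_real_Icc_of_le (by linarith), smul_eq_mul, sub_zero, mul_comm]

lemma integral_sq_div_eq_integral_mul_setIntegral (hμ : ∀ᵐ v ∂μ, v ∈ Icc 0 M)
    (hb : MemLp b 2 μ) (hψ : ∀ u, ψ u = ∫ v in Iic u, b v ∂μ) (hF : ∀ x, μ.real (Iic x) = F x)
    (he : 0 < e) :
    ∫ s, (ψ s - ψ (s - e)) ^ 2 / (F s - F (s - e))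
      = ∫ v, b v * (∫ s in Ioo v (v + e), canonicalGradient ψ F e s) ∂μ := by
  have hinner (s : ℝ) : ∫ v, gradientKernel ψ F b e (s, v) ∂μ
      = (ψ s - ψ (s - e)) ^ 2 / (F s - F (s - e)) := by
    simp only [gradientKernel]
    rw [integral_const_mul, integral_indicator measurableSet_Ioc,
      ← sub_eq_setIntegral_Ioc (hb.integrable one_le_two) hψ (by linarith), canonicalGradient]
    ring
  calc ∫ s, (ψ s - ψ (s - e)) ^ 2 / (F s - F (s - e))
      = ∫ s, ∫ v, gradientKernel ψ F b e (s, v) ∂μ := by simp only [hinner]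
    _ = ∫ v, (∫ s, gradientKernel ψ F b e (s, v)) ∂μ :=
        integral_integral_swap (integrable_gradientKernel hμ hb hψ hF he)
    _ = ∫ v, b v * (∫ s in Ioo v (v + e), canonicalGradient ψ F e s) ∂μ := by
        simp only [gradientKernel, integral_mul_indicator_Ioc_sub]

end GradientKernel

section MixingOverExposure

variable {μ ν : Measure ℝ} [IsFiniteMeasure μ] [IsFiniteMeasure ν] {b ψ F : ℝ → ℝ}
  {M ε : ℝ}

lemma integrable_inv_mul_mul_setIntegral_canonicalGradient (hν : ∀ᵐ e ∂ν, ε ≤ e)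
    (hε : 0 < ε) (hμ : ∀ᵐ v ∂μ, v ∈ Icc 0 M) (hM : 0 ≤ M) (hb : MemLp b 2 μ)
    (hψ : ∀ u, ψ u = ∫ v in Iic u, b v ∂μ) (hF : ∀ x, μ.real (Iic x) = F x) :
    Integrable (fun p : ℝ × ℝ =>
      p.1⁻¹ * (b p.2 * ∫ s in Ioo p.2 (p.2 + p.1), canonicalGradient ψ F p.1 s))
      (ν.prod μ) := by
  have hψm : Measurable ψ :=
    (funext hψ : ψ = _) ▸ measurable_setIntegral_Iic (hb.integrable one_le_two)
  have hJ : Measurable fun p : ℝ × ℝ =>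
      ∫ s in Ioo p.2 (p.2 + p.1), canonicalGradient ψ F p.1 s :=
    measurable_setIntegral_Ioo_add
      (measurable_canonicalGradient hψm (monotone_of_measureReal_Iic hF).measurable)
  have hmeas : AEStronglyMeasurable (fun p : ℝ × ℝ =>
      p.1⁻¹ * (b p.2 * ∫ s in Ioo p.2 (p.2 + p.1), canonicalGradient ψ F p.1 s)) (ν.prod μ) :=
    measurable_fst.inv.aestronglyMeasurable.mul (hb.1.comp_snd.mul hJ.aestronglyMeasurable)
  refine (integrable_prod_iff hmeas).2 ⟨hν.mono fun e he => ?_, ?_⟩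
  · have hK := (integrable_gradientKernel hμ hb hψ hF (hε.trans_le he)).integral_prod_right
    simp only [gradientKernel, integral_mul_indicator_Ioc_sub] at hK
    exact hK.const_mul e⁻¹
  refine Integrable.mono' (integrable_const ((∫ v, b v ^ 2 ∂μ) * (M / ε + 1)))
    hmeas.norm.integral_prod_right' (hν.mono fun e he => ?_)
  have he0 := hε.trans_le he
  rw [Real.norm_of_nonneg (integral_nonneg fun v => norm_nonneg _)]
  calc ∫ v, ‖e⁻¹ * (b v * ∫ s in Ioo v (v + e), canonicalGradient ψ F e s)‖ ∂μ
      = e⁻¹ * ∫ v, ‖∫ s, gradientKernel ψ F b e (s, v)‖ ∂μ := by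
        simp only [norm_mul, integral_const_mul, gradientKernel,
          integral_mul_indicator_Ioc_sub, norm_inv, Real.norm_of_nonneg he0.le]
    _ ≤ e⁻¹ * ((∫ v, b v ^ 2 ∂μ) * (M + e)) := by
        gcongr
        exact integral_norm_integral_gradientKernel_le hμ hM hb hψ hF he0
    _ = (∫ v, b v ^ 2 ∂μ) * (M / e + 1) := by field_simp
    _ ≤ (∫ v, b v ^ 2 ∂μ) * (M / ε + 1) := by gcongr

theorem integral_inv_mul_integral_sq_div_eq (hν : ∀ᵐ e ∂ν, ε ≤ e) (hε : 0 < ε)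
    (hμ : ∀ᵐ v ∂μ, v ∈ Icc 0 M) (hM : 0 ≤ M) (hb : MemLp b 2 μ)
    (hψ : ∀ u, ψ u = ∫ v in Iic u, b v ∂μ) (hF : ∀ x, μ.real (Iic x) = F x) :
    ∫ e, e⁻¹ * (∫ s, (ψ s - ψ (s - e)) ^ 2 / (F s - F (s - e))) ∂ν
      = ∫ v, b v * (∫ e, e⁻¹ * (∫ s in Ioo v (v + e), canonicalGradient ψ F e s) ∂ν) ∂μ := by
  calc ∫ e, e⁻¹ * (∫ s, (ψ s - ψ (s - e)) ^ 2 / (F s - F (s - e))) ∂ν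
      = ∫ e, (∫ v, e⁻¹ * (b v * ∫ s in Ioo v (v + e), canonicalGradient ψ F e s) ∂μ) ∂ν := by
        refine integral_congr_ae (hν.mono fun e he => ?_)
        dsimp only
        rw [integral_sq_div_eq_integral_mul_setIntegral hμ hb hψ hF (hε.trans_le he),
          integral_const_mul]
    _ = ∫ v, (∫ e, e⁻¹ * (b v * ∫ s in Ioo v (v + e), canonicalGradient ψ F e s) ∂ν) ∂μ :=
        integral_integral_swap
          (integrable_inv_mul_mul_setIntegral_canonicalGradient hν hε hμ hM hb hψ hF)
    _ = ∫ v, b v * (∫ e, e⁻¹ * (∫ s in Ioo v (v + e), canonicalGradient ψ F e s) ∂ν) ∂μ := by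
        simp only [mul_left_comm _ (b _), integral_const_mul]

end MixingOverExposure

section MeanZero

variable {μ : Measure ℝ} {b : ℝ → ℝ}

lemma integral_mul_sub_const_of_integral_eq_zero (hb : Integrable b μ)
    (hbv : Integrable (fun v => b v * v) μ) (h0 : ∫ v, b v ∂μ = 0) (c : ℝ) :
    ∫ v, b v * (v - c) ∂μ = ∫ v, b v * v ∂μ := by
  simp only [mul_sub]
  rw [integral_sub hbv (hb.mul_const c), integral_mul_const, h0, zero_mul, sub_zero]

lemma integrable_mul_id_of_ae_mem_Icc {M : ℝ} (hb : Integrable b μ)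
    (hμ : ∀ᵐ v ∂μ, v ∈ Icc 0 M) : Integrable (fun v => b v * v) μ :=
  hb.mul_bdd aestronglyMeasurable_id (hμ.mono fun v hv => by
    rw [Real.norm_eq_abs, abs_of_nonneg hv.1]; exact hv.2)

variable [SFinite μ] {ψ : ℝ → ℝ} {M : ℝ}

lemma setIntegral_Icc_eq_integral_mul_sub (hμ : ∀ᵐ v ∂μ, v ∈ Icc 0 M) (hb : Integrable b μ)
    (hψ : ∀ u, ψ u = ∫ v in Iic u, b v ∂μ) :
    ∫ u in Icc 0 M, ψ u = ∫ v, b v * (M - v) ∂μ := by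
  have hS : MeasurableSet {p : ℝ × ℝ | p.2 ∈ Iic p.1} :=
    measurableSet_le measurable_snd measurable_fst
  have hind : Integrable (fun p : ℝ × ℝ => (Iic p.1).indicator b p.2)
      ((volume.restrict (Icc 0 M)).prod μ) :=
    (hb.norm.comp_snd _).mono' (hb.1.comp_snd.indicator hS)
      (Eventually.of_forall fun p => norm_indicator_le_norm_self b p.2)
  calc ∫ u in Icc 0 M, ψ u = ∫ u in Icc 0 M, (∫ v, (Iic u).indicator b v ∂μ) := by
        simp only [hψ, integral_indicator measurableSet_Iic]
    _ = ∫ v, (∫ u in Icc 0 M, (Iic u).indicator b v) ∂μ := integral_integral_swap hind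
    _ = ∫ v, b v * (M - v) ∂μ := by
        refine integral_congr_ae (hμ.mono fun v hv => ?_)
        have hswap (u : ℝ) : (Iic u).indicator b v = (Ici v).indicator (fun _ => b v) u := by
          by_cases hvu : v ≤ u <;> simp [hvu]
        have hcap : Icc 0 M ∩ Ici v = Icc v M := by
          ext u
          simp only [mem_inter_iff, mem_Icc, mem_Ici]
          constructor
          · rintro ⟨⟨-, huM⟩, hvu⟩; exact ⟨hvu, huM⟩
          · rintro ⟨hvu, huM⟩; exact ⟨⟨hv.1.trans hvu, huM⟩, hvu⟩
        simp only [hswap]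
        rw [setIntegral_indicator measurableSet_Ici, hcap, setIntegral_const,
          Real.volume_real_Icc_of_le hv.2, smul_eq_mul, mul_comm]

lemma setIntegral_Icc_eq_neg_integral_mul_id (hμ : ∀ᵐ v ∂μ, v ∈ Icc 0 M) (hb : Integrable b μ)
    (h0 : ∫ v, b v ∂μ = 0) (hψ : ∀ u, ψ u = ∫ v in Iic u, b v ∂μ) :
    ∫ u in Icc 0 M, ψ u = -∫ v, b v * v ∂μ := by
  rw [setIntegral_Icc_eq_integral_mul_sub hμ hb hψ,
    ← integral_mul_sub_const_of_integral_eq_zero hb (integrable_mul_id_of_ae_mem_Icc hb hμ) h0 M,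
    ← integral_neg]
  simp only [mul_sub, neg_sub]

end MeanZero

theorem canonical_gradient_norm_mean_functional_general
    (M₁ M₂ ε : ℝ) (hM₁ : 0 < M₁) (hε : 0 < ε)
    (μ₀ : Measure ℝ) [IsProbabilityMeasure μ₀]
    (F0 : ℝ → ℝ)
    (hμ₀F0 : ∀ x, (μ₀ (Set.Iic x)).toReal = F0 x)
    (hF00 : F0 0 = 0) (hF0M₁ : F0 M₁ = 1)
    (ν : Measure ℝ) [IsProbabilityMeasure ν] (hνsupp : ν (Set.Icc ε M₂)ᶜ = 0)
    (a : ℝ → ℝ) (ha : MemLp a 2 μ₀) (hamean : ∫ x, a x ∂μ₀ = 0)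
    (φ : ℝ → ℝ) (hφ : ∀ u, φ u = ∫ v in Set.Icc 0 u, a v ∂μ₀)
    (heq : ∀ v ∈ Set.Icc (0 : ℝ) M₁,
      (∫ e, e⁻¹ * (∫ s in Set.Ioo v (v + e), (φ s - φ (s - e)) / (F0 s - F0 (s - e))) ∂ν)
        = v - ∫ x in Set.Icc (0 : ℝ) M₁, x ∂μ₀) :
    (∫ e, e⁻¹ * (∫ s, (φ s - φ (s - e)) ^ 2 / (F0 s - F0 (s - e))) ∂ν)
      = - ∫ u in Set.Icc (0 : ℝ) M₁, φ u := by
  have hμ₀ : ∀ᵐ v ∂μ₀, v ∈ Icc 0 M₁ := ae_mem_Icc_of_measureReal_Iic hμ₀F0 hF00 hF0M₁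
  have hν : ∀ᵐ e ∂ν, e ∈ Icc ε M₂ := mem_ae_iff.2 hνsupp
  have hφIic (u : ℝ) : φ u = ∫ v in Iic u, a v ∂μ₀ :=
    (hφ u).trans (setIntegral_Icc_zero_eq_setIntegral_Iic (hμ₀.mono fun v hv => hv.1) a u)
  have ha₁ : Integrable a μ₀ := ha.integrable one_le_two
  calc _ = ∫ v, a v * (∫ e, e⁻¹ * (∫ s in Ioo v (v + e), canonicalGradient φ F0 e s) ∂ν) ∂μ₀ :=
        integral_inv_mul_integral_sq_div_eq (hν.mono fun e he => he.1) hε hμ₀ hM₁.le ha hφIic hμ₀F0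
    _ = ∫ v, a v * (v - ∫ x in Icc 0 M₁, x ∂μ₀) ∂μ₀ :=
        integral_congr_ae (hμ₀.mono fun v hv => congrArg (a v * ·) (heq v hv))
    _ = ∫ v, a v * v ∂μ₀ := integral_mul_sub_const_of_integral_eq_zero ha₁
        (integrable_mul_id_of_ae_mem_Icc ha₁ hμ₀) hamean _
    _ = -∫ u in Icc 0 M₁, φ u := by
        rw [setIntegral_Icc_eq_neg_integral_mul_id hμ₀ ha₁ hamean hφIic, neg_neg]

/-- Squared norm of the canonical gradient for the mean functional in the incubation
time model: with `φ(u) = ∫_{[0,u]} a dF0` for `a ∈ L²(F0)` with `∫ a dF0 = 0`, if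
`∫ e⁻¹ ∫_{(v, v+e)} (φ(s) − φ(s−e))/(F0(s) − F0(s−e)) ds dF_E(e) = v − ∫_0^{M₁} x dF0(x)`
for every `v ∈ [0, M₁]`, then
`∫ e⁻¹ ∫_ℝ (φ(s) − φ(s−e))²/(F0(s) − F0(s−e)) ds dF_E(e) = −∫_0^{M₁} φ(u) du`. -/
theorem canonical_gradient_norm_mean_functional
    (M₁ M₂ ε : ℝ) (hM₁ : 0 < M₁) (hε : 0 < ε)
    (μ₀ : Measure ℝ) [IsProbabilityMeasure μ₀]
    (F0 f0 : ℝ → ℝ)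
    (hF0 : ∀ x, F0 x = ∫ y in Set.Iic x, f0 y)
    (hf0cont : ContinuousOn f0 (Set.Icc 0 M₁))
    (hf0supp : ∀ x, x ∉ Set.Icc 0 M₁ → f0 x = 0)
    (hμ₀F0 : ∀ x, (μ₀ (Set.Iic x)).toReal = F0 x)
    (hF00 : F0 0 = 0) (hF0M₁ : F0 M₁ = 1)
    (ν : Measure ℝ) [IsProbabilityMeasure ν] (hνsupp : ν (Set.Icc ε M₂)ᶜ = 0)
    (a : ℝ → ℝ) (ha : MemLp a 2 μ₀) (hamean : ∫ x, a x ∂μ₀ = 0)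
    (φ : ℝ → ℝ) (hφ : ∀ u, φ u = ∫ v in Set.Icc 0 u, a v ∂μ₀)
    (heq : ∀ v ∈ Set.Icc (0 : ℝ) M₁,
      (∫ e, e⁻¹ * (∫ s in Set.Ioo v (v + e), (φ s - φ (s - e)) / (F0 s - F0 (s - e))) ∂ν)
        = v - ∫ x in Set.Icc (0 : ℝ) M₁, x ∂μ₀) :
    (∫ e, e⁻¹ * (∫ s, (φ s - φ (s - e)) ^ 2 / (F0 s - F0 (s - e))) ∂ν)
      = - ∫ u in Set.Icc (0 : ℝ) M₁, φ u :=
  canonical_gradient_norm_mean_functional_general M₁ M₂ ε hM₁ hε μ₀ F0 hμ₀F0 hF00 hF0M₁ ν hνsupp a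
    ha hamean φ hφ heq
end
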